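/- arXiv:math/0011015 — 4 statements merged into one kernel-verified Lean document; each statement's English description precedes it below -/
import Mathlib

section
/- Let J_1, …, J_{p+1} be Jordan normal forms of size n with r_1 + … + r_{p+1} ≥ n and r_1 + … + r_{p+1} < 2n, where r_j = r(J_j) and d_j = d(J_j). Set n_1 = r_1 + … + r_{p+1} − n (so n_1 < n and n − n_1 ≤ n − r_j for all j). For each j define a Jordan normal form J_j′ of size n_1 as follows: choose an eigenvalue of J_j with the greatest number n − r_j of Jordan blocks, decrease by 1 the sizes of the n − n_1 smallest Jordan blocks with this eigenvalue, and delete the blocks of size 0. Then the index of rigidity is invariant under this construction: 2n² − Σ_{j=1}^{p+1} d(J_j) = 2n_1² − Σ_{j=1}^{p+1} d(J_j′). -/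
set_option maxHeartbeats 1000000

noncomputable section

/-- A Jordan normal form (JNF) of size `n`: a finite family (indexed by the distinct
eigenvalues `l`) of nonempty multisets of positive integers (the sizes of the Jordan
blocks with the `l`-th eigenvalue), the sum of all sizes being `n`. -/
structure JNF (n : ℕ) where
  k : ℕ
  blocks : Fin k → Multiset ℕ
  blocks_nonempty : ∀ l, blocks l ≠ 0
  blocks_pos : ∀ l, ∀ s ∈ blocks l, 0 < s
  total : (∑ l, (blocks l).sum) = n

namespace JNF

variable {n : ℕ}

/-- The maximal number of Jordan blocks with one and the same eigenvalue. -/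
def maxBlocks (J : JNF n) : ℕ := Finset.univ.sup fun l => (J.blocks l).card

/-- `r(J) = n` minus the maximal number of Jordan blocks with one and the same
eigenvalue; equivalently `min_{λ} rank (Y − λ I)` for any matrix `Y` with JNF `J`. -/
def r (J : JNF n) : ℕ := n - J.maxBlocks

/-- `d(J) = n² − dim {X | XY = YX}` for any matrix `Y` with JNF `J`; the dimension of
the centralizer equals `∑_l ∑_{i,i'} min (b_{i,l}, b_{i',l})`. -/
def d (J : JNF n) : ℕ :=
  n ^ 2 - ∑ l, ((J.blocks l).bind fun s => (J.blocks l).map fun t => min s t).sum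

/-- The JNF as a multiset of multisets of block sizes (one multiset per eigenvalue). -/
def toM (J : JNF n) : Multiset (Multiset ℕ) := Finset.univ.val.map J.blocks

end JNF

/-- The basic construction `{J_j^n} ↦ {J_j^{n₁}}`: in the JNF `J` one chooses an
eigenvalue `l` with the greatest number of Jordan blocks, decreases by `1` the sizes of
the `δ` smallest Jordan blocks with this eigenvalue and deletes the blocks of size `0`;
the result is the JNF `J'`. -/
def ReducesTo {n n₁ : ℕ} (J : JNF n) (J' : JNF n₁) (δ : ℕ) : Prop :=
  ∃ l : Fin J.k,
    (J.blocks l).card = J.maxBlocks ∧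
    ∃ Bkeep Bdec : Multiset ℕ,
      J.blocks l = Bkeep + Bdec ∧
      Bdec.card = δ ∧
      (∀ x ∈ Bdec, ∀ y ∈ Bkeep, x ≤ y) ∧
      J'.toM = J.toM.erase (J.blocks l) +
        (let newB := Bkeep + (Bdec.map fun s => s - 1).filter (0 < ·)
         if newB = 0 then 0 else {newB})

namespace JNFAux

/-- pairwise min sum -/
def mcross (A B : Multiset ℕ) : ℕ := (A.map fun x => (B.map fun y => min x y).sum).sum

def mcc (M : Multiset ℕ) : ℕ := (M.bind fun s => M.map fun t => min s t).sum

lemma mcc_eq_cross (M : Multiset ℕ) : mcc M = mcross M M := by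
  simp [mcc, mcross, Multiset.sum_bind]

lemma mcross_add_left (A B C : Multiset ℕ) :
    mcross (A + B) C = mcross A C + mcross B C := by
  simp [mcross, Multiset.map_add, Multiset.sum_add]

lemma mcross_add_right (A B C : Multiset ℕ) :
    mcross A (B + C) = mcross A B + mcross A C := by
  simp [mcross, Multiset.map_add, Multiset.sum_add, Multiset.sum_map_add]

lemma mcross_comm (A B : Multiset ℕ) : mcross A B = mcross B A := by
  induction A using Multiset.induction_on with
  | empty => simp [mcross]
  | cons a A ih =>
    simp only [mcross, Multiset.map_cons, Multiset.sum_cons] at *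
    rw [ih, Multiset.sum_map_add]
    congr 2
    apply Multiset.map_congr rfl
    intro x _
    exact min_comm a x

lemma mcc_add (A B : Multiset ℕ) :
    mcc (A + B) = mcc A + 2 * mcross B A + mcc B := by
  rw [mcc_eq_cross, mcc_eq_cross, mcc_eq_cross, mcross_add_left, mcross_add_right,
    mcross_add_right, mcross_comm A B]
  ring

lemma mcross_of_le {A B : Multiset ℕ} (h : ∀ x ∈ A, ∀ y ∈ B, x ≤ y) :
    mcross A B = Multiset.card B * A.sum := by
  unfold mcross
  have h1 : (A.map fun x => (B.map fun y => min x y).sum).sum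
      = (A.map fun x => Multiset.card B * x).sum := by
    apply congrArg
    apply Multiset.map_congr rfl
    intro x hx
    have : B.map (fun y => min x y) = B.map (Function.const ℕ x) := by
      apply Multiset.map_congr rfl
      intro y hy
      exact min_eq_left (h x hx y hy)
    rw [this, Multiset.map_const, Multiset.sum_replicate, smul_eq_mul]
  rw [h1, Multiset.sum_map_mul_left]
  simp

lemma mcross_zeros_right {A Z : Multiset ℕ} (h : ∀ y ∈ Z, y = 0) :
    mcross A Z = 0 := by
  rw [mcross_comm, mcross_of_le (fun x hx y _ => by simp [h x hx])]
  have : Z.sum = 0 := Multiset.sum_eq_zero h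
  simp [this]

lemma mcc_add_zeros {W Z : Multiset ℕ} (h : ∀ y ∈ Z, y = 0) :
    mcc (W + Z) = mcc W := by
  rw [mcc_add]
  have h1 : mcross Z W = 0 := by rw [mcross_comm]; exact mcross_zeros_right h
  have h2 : mcc Z = 0 := by
    rw [mcc_eq_cross]; exact mcross_zeros_right h
  simp [h1, h2]

lemma mcc_shift {D : Multiset ℕ} (hD : ∀ x ∈ D, 0 < x) :
    mcc D = mcc (D.map fun s => s - 1) + Multiset.card D * Multiset.card D := by
  rw [mcc_eq_cross, mcc_eq_cross]
  have h1 : mcross D D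
      = (D.map fun x => ((D.map fun s => s - 1).map fun y => min (x-1) y).sum
          + Multiset.card D).sum := by
    unfold mcross
    apply congrArg
    apply Multiset.map_congr rfl
    intro x hx
    have h2 : D.map (fun y => min x y)
        = D.map (fun y => min (x-1) (y-1) + 1) := by
      apply Multiset.map_congr rfl
      intro y hy
      have := hD x hx; have := hD y hy
      omega
    rw [h2, Multiset.sum_map_add, Multiset.map_map]
    have : (D.map fun _ => (1:ℕ)).sum = Multiset.card D := by
      rw [show (fun (_:ℕ) => (1:ℕ)) = Function.const ℕ 1 from rfl,
        Multiset.map_const, Multiset.sum_replicate, smul_eq_mul, mul_one]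
    rw [this]
    rfl
  rw [h1, Multiset.sum_map_add]
  congr 1
  · unfold mcross
    rw [Multiset.map_map]
    rfl
  · rw [show (fun (_:ℕ) => Multiset.card D) = Function.const ℕ (Multiset.card D) from rfl,
      Multiset.map_const, Multiset.sum_replicate, smul_eq_mul]

end JNFAux

namespace JNFAux

def jc {n : ℕ} (J : JNF n) : ℕ := ∑ l, mcc (J.blocks l)

lemma d_eq {n : ℕ} (J : JNF n) : J.d = n ^ 2 - jc J := rfl

lemma jc_toM {n : ℕ} (J : JNF n) : jc J = (J.toM.map mcc).sum := by
  rw [JNF.toM, Multiset.map_map]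
  rfl

lemma card_le_sum {M : Multiset ℕ} (h : ∀ x ∈ M, 0 < x) :
    Multiset.card M ≤ M.sum := by
  have : (M.map fun _ => (1:ℕ)).sum ≤ (M.map id).sum :=
    Multiset.sum_map_le_sum_map _ _ (fun i hi => h i hi)
  simpa using this

lemma sum_blocks_le {n : ℕ} (J : JNF n) (l : Fin J.k) : (J.blocks l).sum ≤ n := by
  have h1 : (J.blocks l).sum ≤ ∑ i, (J.blocks i).sum := by
    exact Finset.single_le_sum (f := fun i => (J.blocks i).sum)
      (fun i _ => Nat.zero_le _) (Finset.mem_univ l)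
  have h2 := J.total
  omega

lemma maxBlocks_le {n : ℕ} (J : JNF n) : J.maxBlocks ≤ n := by
  apply Finset.sup_le
  intro l _
  exact le_trans (card_le_sum (J.blocks_pos l)) (sum_blocks_le J l)

lemma mcc_le_sq {M : Multiset ℕ} (h : ∀ x ∈ M, 0 < x) : mcc M ≤ M.sum * M.sum := by
  rw [mcc_eq_cross]
  have h1 : mcross M M ≤ Multiset.card M * M.sum := by
    unfold mcross
    calc (M.map fun x => (M.map fun y => min x y).sum).sum
        ≤ (M.map fun _ => M.sum).sum := by
          apply Multiset.sum_map_le_sum_map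
          intro x _
          calc (M.map fun y => min x y).sum ≤ (M.map id).sum :=
              Multiset.sum_map_le_sum_map _ _ (fun y _ => min_le_right x y)
            _ = M.sum := by simp
      _ = Multiset.card M * M.sum := by
          rw [show (fun (_:ℕ) => M.sum) = Function.const ℕ M.sum from rfl,
            Multiset.map_const, Multiset.sum_replicate, smul_eq_mul]
  exact le_trans h1 (Nat.mul_le_mul_right _ (card_le_sum h))

lemma jc_le {n : ℕ} (J : JNF n) : jc J ≤ n ^ 2 := by
  have h1 : jc J ≤ ∑ l, (J.blocks l).sum * (J.blocks l).sum :=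
    Finset.sum_le_sum (fun l _ => mcc_le_sq (J.blocks_pos l))
  have h2 : ∑ l, (J.blocks l).sum * (J.blocks l).sum
      ≤ ∑ l, (J.blocks l).sum * n :=
    Finset.sum_le_sum (fun l _ => Nat.mul_le_mul_left _ (sum_blocks_le J l))
  rw [← Finset.sum_mul, J.total] at h2
  rw [pow_two]
  exact le_trans h1 h2

lemma key {n n₁ δ : ℕ} (J : JNF n) (J' : JNF n₁) (h : ReducesTo J J' δ) :
    ∃ m', m' + δ = J.maxBlocks ∧ jc J = jc J' + 2 * m' * δ + δ ^ 2 := by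
  obtain ⟨l, hcard, K, D, hKD, hDcard, hle, htoM⟩ := h
  refine ⟨Multiset.card K, ?_, ?_⟩
  · rw [← hcard, hKD, Multiset.card_add, hDcard]
  · have hmem : J.blocks l ∈ J.toM :=
      Multiset.mem_map_of_mem J.blocks (by simp [Finset.mem_univ])
    set E := J.toM.erase (J.blocks l) with hE
    set D'' := D.map (fun s => s - 1) with hD''
    set P := D''.filter (0 < ·) with hP
    have hDpos : ∀ x ∈ D, 0 < x := fun x hx =>
      J.blocks_pos l x (by rw [hKD]; exact Multiset.mem_add.mpr (Or.inr hx))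
    -- jc J
    have hJ : jc J = mcc (J.blocks l) + (E.map mcc).sum := by
      rw [jc_toM, ← Multiset.cons_erase hmem, Multiset.map_cons, Multiset.sum_cons]
    -- jc J'
    have hJ' : jc J' = (E.map mcc).sum + mcc (K + P) := by
      rw [jc_toM, htoM, Multiset.map_add, Multiset.sum_add]
      congr 1
      show (Multiset.map mcc (if K + P = 0 then 0 else {K + P})).sum = mcc (K + P)
      by_cases hz : K + P = 0
      · rw [if_pos hz, hz]
        simp [mcc]
      · rw [if_neg hz]
        simp
    -- zeros
    have hA : mcc (K + D'') = mcc (K + P) := by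
      have hsplit : K + D'' = (K + P) + D''.filter (fun x => ¬ 0 < x) := by
        rw [add_assoc, hP, Multiset.filter_add_not]
      rw [hsplit]
      exact mcc_add_zeros (fun y hy => by
        have := (Multiset.mem_filter.mp hy).2; omega)
    -- cross values
    have hleD'' : ∀ x ∈ D'', ∀ y ∈ K, x ≤ y := by
      intro x hx y hy
      obtain ⟨d, hd, rfl⟩ := Multiset.mem_map.mp hx
      exact le_trans (Nat.sub_le d 1) (hle d hd y hy)
    have hB : mcc (K + D) = mcc K + 2 * (Multiset.card K * D.sum) + mcc D := by
      rw [mcc_add, mcross_of_le hle]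
    have hC : mcc (K + D'') = mcc K + 2 * (Multiset.card K * D''.sum) + mcc D'' := by
      rw [mcc_add, mcross_of_le hleD'']
    have hsum : D.sum = D''.sum + δ := by
      have hmapid : D.map (fun d => (d - 1) + 1) = D := by
        conv_rhs => rw [← Multiset.map_id D]
        exact Multiset.map_congr rfl
          (fun d hd => by have := hDpos d hd; simp only [id_eq]; omega)
      rw [← hmapid, Multiset.sum_map_add]
      congr 1
      rw [show (fun (_:ℕ) => (1:ℕ)) = Function.const ℕ 1 from rfl,
        Multiset.map_const, Multiset.sum_replicate, smul_eq_mul, mul_one, hDcard]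
    have hshift : mcc D = mcc D'' + δ * δ := by
      rw [mcc_shift hDpos, hDcard]
    rw [hJ, hJ', hKD, hB, ← hA, hC, hsum, hshift]
    ring

end JNFAux

/-- Let `J_1, …, J_{p+1}` be JNFs of size `n > 1` with
`n ≤ r_1 + … + r_{p+1} < 2n` and set `n₁ = r_1 + … + r_{p+1} − n`.  If for each `j` the
JNF `J'_j` of size `n₁` is obtained from `J_j` by the basic construction (decrease by `1`
the sizes of the `n − n₁` smallest Jordan blocks of an eigenvalue with the greatest number
`n − r_j` of blocks, then delete blocks of size `0`), then the index of rigidity is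
preserved: `2n² − ∑_j d(J_j) = 2n₁² − ∑_j d(J'_j)`. -/
theorem index_of_rigidity_invariant
    (p n n₁ : ℕ) (hn : 1 < n)
    (J : Fin (p + 1) → JNF n) (J' : Fin (p + 1) → JNF n₁)
    (hβ : n ≤ ∑ j, (J j).r)
    (hω : ∑ j, (J j).r < 2 * n)
    (hn₁ : n₁ = (∑ j, (J j).r) - n)
    (hred : ∀ j, ReducesTo (J j) (J' j) (n - n₁)) :
    (2 * n ^ 2 : ℤ) - ∑ j, ((J j).d : ℤ) = 2 * n₁ ^ 2 - ∑ j, ((J' j).d : ℤ) := by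
  classical
  have hTn : (∑ j, (J j).r) = n + n₁ := by omega
  have hδle : n₁ ≤ n := by omega
  choose m hm1 hm2 using fun j => JNFAux.key (J j) (J' j) (hred j)
  -- cast per-j equation to ℤ
  have hcj : ∀ j, (JNFAux.jc (J j) : ℤ) = (JNFAux.jc (J' j) : ℤ)
      + (2 * (n₁ : ℤ) * ((n : ℤ) - n₁) + ((n : ℤ) - n₁) ^ 2)
      - 2 * ((n : ℤ) - n₁) * ((J j).r : ℤ) := by
    intro j
    have h2 := hm2 j
    have h1 := hm1 j
    have hmb := JNFAux.maxBlocks_le (J j)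
    have hr : (J j).r = n - (J j).maxBlocks := rfl
    have hmz : m j = n₁ - (J j).r ∧ (J j).r ≤ n₁ := by omega
    zify [hδle] at h2
    rw [h2]
    have : (m j : ℤ) = (n₁ : ℤ) - ((J j).r : ℤ) := by omega
    rw [this]
    ring
  -- sum the per-j equations
  have hS : (∑ j, (JNFAux.jc (J j) : ℤ)) = (∑ j, (JNFAux.jc (J' j) : ℤ))
      + (p + 1) * (2 * (n₁ : ℤ) * ((n : ℤ) - n₁) + ((n : ℤ) - n₁) ^ 2)
      - 2 * ((n : ℤ) - n₁) * ((n : ℤ) + n₁) := by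
    rw [Finset.sum_congr rfl (fun j _ => hcj j), Finset.sum_sub_distrib,
      Finset.sum_add_distrib, Finset.sum_const, Finset.card_univ, Fintype.card_fin,
      ← Finset.mul_sum]
    have hrs : (∑ j, ((J j).r : ℤ)) = (n : ℤ) + n₁ := by
      rw [← Nat.cast_sum, hTn]
      push_cast
      ring
    rw [hrs]
    push_cast
    ring
  -- rewrite d's
  have hd : ∀ j, ((J j).d : ℤ) = (n : ℤ) ^ 2 - (JNFAux.jc (J j) : ℤ) := by
    intro j
    rw [JNFAux.d_eq, Nat.cast_sub (JNFAux.jc_le (J j))]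
    push_cast
    ring
  have hd' : ∀ j, ((J' j).d : ℤ) = (n₁ : ℤ) ^ 2 - (JNFAux.jc (J' j) : ℤ) := by
    intro j
    rw [JNFAux.d_eq, Nat.cast_sub (JNFAux.jc_le (J' j))]
    push_cast
    ring
  rw [Finset.sum_congr rfl (fun j _ => hd j), Finset.sum_congr rfl (fun j _ => hd' j),
    Finset.sum_sub_distrib, Finset.sum_sub_distrib, Finset.sum_const, Finset.sum_const,
    Finset.card_univ, Fintype.card_fin]
  push_cast
  linear_combination hS
end
end

section
/- Let C_1, …, C_{p+1} ⊂ GL(n,ℂ) be conjugacy classes with index of rigidity 2, i.e. d_1 + … + d_{p+1} = 2n² − 2. Then there cannot coexist irreducible and reducible (p+1)-tuples (M_1, …, M_{p+1}) with M_j ∈ C_j and M_1⋯M_{p+1} = I: if one such tuple is irreducible, then every such tuple is irreducible. -/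
open Matrix

set_option maxHeartbeats 1000000

noncomputable section

/-- The submodule of matrices commuting with a given matrix `A`
(the centralizer of `A` in `gl(n,ℂ)`). -/
def centSubmodule {n : ℕ} (A : Matrix (Fin n) (Fin n) ℂ) :
    Submodule ℂ (Matrix (Fin n) (Fin n) ℂ) where
  carrier := {X | X * A = A * X}
  add_mem' := by
    intro x y hx hy
    simp only [Set.mem_setOf_eq] at *
    rw [add_mul, mul_add, hx, hy]
  zero_mem' := by simp
  smul_mem' := by
    intro c x hx
    simp only [Set.mem_setOf_eq] at *
    rw [smul_mul_assoc, mul_smul_comm, hx]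

/-- A tuple of `n×n` matrices is irreducible if the only subspaces of `ℂⁿ` invariant
under all of them are `{0}` and `ℂⁿ`. -/
def IsIrredTuple {m n : ℕ} (M : Fin m → Matrix (Fin n) (Fin n) ℂ) : Prop :=
  ∀ W : Submodule ℂ (Fin n → ℂ), (∀ j, ∀ v ∈ W, (M j).mulVec v ∈ W) → W = ⊥ ∨ W = ⊤

/-! ### Auxiliary machinery -/

/-- The intertwiner submodule `{X | B * X = X * B'}`. -/
def interMod {n : ℕ} (B B' : Matrix (Fin n) (Fin n) ℂ) :
    Submodule ℂ (Matrix (Fin n) (Fin n) ℂ) where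
  carrier := {X | B * X = X * B'}
  add_mem' := by
    intro x y hx hy
    simp only [Set.mem_setOf_eq] at *
    rw [mul_add, add_mul, hx, hy]
  zero_mem' := by simp
  smul_mem' := by
    intro c x hx
    simp only [Set.mem_setOf_eq] at *
    rw [mul_smul_comm, smul_mul_assoc, hx]

lemma mem_interMod {n : ℕ} {B B' X : Matrix (Fin n) (Fin n) ℂ} :
    X ∈ interMod B B' ↔ B * X = X * B' := Iff.rfl

/-- Conjugation equivalence `X ↦ g⁻¹ X g'` on matrices. -/
def conjEquiv {n : ℕ} (g g' : (Matrix (Fin n) (Fin n) ℂ)ˣ) :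
    Matrix (Fin n) (Fin n) ℂ ≃ₗ[ℂ] Matrix (Fin n) (Fin n) ℂ where
  toFun X := g⁻¹.val * X * g'.val
  map_add' X Y := by noncomm_ring
  map_smul' c X := by simp [mul_smul_comm, smul_mul_assoc]
  invFun Y := g.val * Y * g'⁻¹.val
  left_inv X := by
    simp only [← mul_assoc]
    rw [Units.mul_inv, one_mul, mul_assoc, Units.mul_inv, mul_one]
  right_inv Y := by
    simp only [← mul_assoc]
    rw [Units.inv_mul, one_mul, mul_assoc, Units.inv_mul, mul_one]

lemma map_conjEquiv_interMod {n : ℕ} (A : Matrix (Fin n) (Fin n) ℂ)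
    (g g' : (Matrix (Fin n) (Fin n) ℂ)ˣ) :
    Submodule.map (conjEquiv g g' : Matrix (Fin n) (Fin n) ℂ →ₗ[ℂ] Matrix (Fin n) (Fin n) ℂ)
      (interMod (g.val * A * g⁻¹.val) (g'.val * A * g'⁻¹.val)) = centSubmodule A := by
  ext Y
  simp only [Submodule.mem_map]
  constructor
  · rintro ⟨X, hX, rfl⟩
    rw [mem_interMod] at hX
    show (conjEquiv g g') X ∈ centSubmodule A
    show (g⁻¹.val * X * g'.val) * A = A * (g⁻¹.val * X * g'.val)
    have h2 : g⁻¹.val * (g.val * A * g⁻¹.val * X) * g'.val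
        = g⁻¹.val * (X * (g'.val * A * g'⁻¹.val)) * g'.val := by rw [hX]
    calc (g⁻¹.val * X * g'.val) * A
        = g⁻¹.val * (X * (g'.val * A * g'⁻¹.val)) * g'.val := by
          simp only [mul_assoc]
          rw [Units.inv_mul, mul_one]
      _ = g⁻¹.val * (g.val * A * g⁻¹.val * X) * g'.val := h2.symm
      _ = A * (g⁻¹.val * X * g'.val) := by
          simp only [← mul_assoc]
          rw [Units.inv_mul, one_mul]
  · intro hY
    have hYc : Y * A = A * Y := hY
    refine ⟨g.val * Y * g'⁻¹.val, ?_, ?_⟩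
    · rw [mem_interMod]
      calc g.val * A * g⁻¹.val * (g.val * Y * g'⁻¹.val)
          = g.val * (A * Y) * g'⁻¹.val := by
            simp only [mul_assoc]
            rw [← mul_assoc g⁻¹.val g.val, Units.inv_mul, one_mul]
        _ = g.val * (Y * A) * g'⁻¹.val := by rw [hYc]
        _ = g.val * Y * g'⁻¹.val * (g'.val * A * g'⁻¹.val) := by
            simp only [mul_assoc]
            rw [← mul_assoc g'⁻¹.val g'.val, Units.inv_mul, one_mul]
    · show g⁻¹.val * (g.val * Y * g'⁻¹.val) * g'.val = Y
      simp only [← mul_assoc]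
      rw [Units.inv_mul, one_mul, mul_assoc, Units.inv_mul, mul_one]

lemma finrank_interMod' {n : ℕ} (A : Matrix (Fin n) (Fin n) ℂ)
    (g g' : (Matrix (Fin n) (Fin n) ℂ)ˣ) :
    Module.finrank ℂ (interMod (g.val * A * g⁻¹.val) (g'.val * A * g'⁻¹.val))
      = Module.finrank ℂ (centSubmodule A) := by
  rw [← map_conjEquiv_interMod A g g', LinearEquiv.finrank_map_eq]

lemma trace_repr {n : ℕ} (f : Matrix (Fin n) (Fin n) ℂ →ₗ[ℂ] ℂ) :
    ∃ Y : Matrix (Fin n) (Fin n) ℂ, ∀ X, f X = ((Y * X).trace) := by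
  refine ⟨Matrix.of fun i j => f (Matrix.single j i 1), fun X => ?_⟩
  conv_lhs => rw [matrix_eq_sum_single X]
  simp only [map_sum]
  rw [Matrix.trace]
  simp only [Matrix.diag, Matrix.mul_apply, Matrix.of_apply]
  rw [Finset.sum_comm]
  refine Finset.sum_congr rfl fun i _ => ?_
  refine Finset.sum_congr rfl fun j _ => ?_
  have h1 : Matrix.single j i (X j i) = (X j i) • Matrix.single j i 1 := by
    rw [smul_single, smul_eq_mul, mul_one]
  rw [h1, _root_.map_smul, smul_eq_mul, mul_comm]

lemma eq_zero_of_trace_mul {n : ℕ} (Z : Matrix (Fin n) (Fin n) ℂ)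
    (h : ∀ X, ((Z * X).trace) = 0) : Z = 0 := by
  ext i j
  have := h (Matrix.single j i 1)
  simp only [Matrix.trace, Matrix.diag, Matrix.mul_apply, Matrix.single, Matrix.of_apply] at this
  simpa [ite_and, Finset.sum_ite_eq, Finset.sum_ite_eq', mul_ite] using this

lemma finrank_mat {n : ℕ} : Module.finrank ℂ (Matrix (Fin n) (Fin n) ℂ) = n * n := by
  simp [Module.finrank_matrix]

/-- **Key dimension-count lemma** (Scott's lemma applied to `Hom(V', V)`): if the sum of the
dimensions of the intertwiner spaces between two product-one tuples equals `(p-1)n² + 2`,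
then there is a nonzero intertwiner in one of the two directions. -/
lemma exists_intertwiner
    (n p : ℕ)
    (M M' : Fin (p + 1) → Matrix (Fin n) (Fin n) ℂ)
    (u u' : Fin (p + 1) → (Matrix (Fin n) (Fin n) ℂ)ˣ)
    (hu : ∀ j, (u j).val = M j) (hu' : ∀ j, (u' j).val = M' j)
    (hMprod : (List.ofFn M).prod = 1) (hM'prod : (List.ofFn M').prod = 1)
    (hdim : (∑ j, (Module.finrank ℂ (interMod (M j) (M' j)) : ℤ))
        = ((p : ℤ) - 1) * (n * n) + 2) :
    (∃ X : Matrix (Fin n) (Fin n) ℂ, X ≠ 0 ∧ ∀ j, M j * X = X * M' j) ∨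
    (∃ Y : Matrix (Fin n) (Fin n) ℂ, Y ≠ 0 ∧ ∀ j, Y * M j = M' j * Y) := by
  by_contra hcon
  rw [not_or] at hcon
  have h1 : ∀ X : Matrix (Fin n) (Fin n) ℂ, (∀ j, M j * X = X * M' j) → X = 0 := by
    intro X hX
    by_contra hX0
    exact hcon.1 ⟨X, hX0, hX⟩
  have h2 : ∀ Y : Matrix (Fin n) (Fin n) ℂ, (∀ j, Y * M j = M' j * Y) → Y = 0 := by
    intro Y hY
    by_contra hY0
    exact hcon.2 ⟨Y, hY0, hY⟩
  -- partial products as units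
  set PU : ℕ → (Matrix (Fin n) (Fin n) ℂ)ˣ := fun t => ((List.ofFn u).take t).prod with hPUdef
  set PU' : ℕ → (Matrix (Fin n) (Fin n) ℂ)ˣ := fun t => ((List.ofFn u').take t).prod with hPU'def
  have hPU0 : PU 0 = 1 := by simp [hPUdef]
  have hPU'0 : PU' 0 = 1 := by simp [hPU'def]
  have hPUsucc : ∀ j : Fin (p+1), PU ((j : ℕ) + 1) = PU (j : ℕ) * u j := by
    intro j
    have hlen : (j : ℕ) < (List.ofFn u).length := by simp [j.isLt]
    show ((List.ofFn u).take ((j : ℕ) + 1)).prod = ((List.ofFn u).take (j : ℕ)).prod * u j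
    rw [List.prod_take_succ _ _ hlen]
    congr 1
    rw [List.getElem_ofFn]
  have hPU'succ : ∀ j : Fin (p+1), PU' ((j : ℕ) + 1) = PU' (j : ℕ) * u' j := by
    intro j
    have hlen : (j : ℕ) < (List.ofFn u').length := by simp [j.isLt]
    show ((List.ofFn u').take ((j : ℕ) + 1)).prod = ((List.ofFn u').take (j : ℕ)).prod * u' j
    rw [List.prod_take_succ _ _ hlen]
    congr 1
    rw [List.getElem_ofFn]
  have hPUtop : PU (p+1) = 1 := by
    apply Units.ext
    show (((List.ofFn u).take (p+1)).prod : (Matrix (Fin n) (Fin n) ℂ)ˣ).val = 1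
    have htake : (List.ofFn u).take (p+1) = List.ofFn u := by
      apply List.take_of_length_le; simp
    rw [htake]
    calc ((List.ofFn u).prod).val
        = ((List.ofFn u).map (Units.coeHom (Matrix (Fin n) (Fin n) ℂ))).prod :=
          (map_list_prod (Units.coeHom _) _)
      _ = (List.ofFn M).prod := by
          rw [List.map_ofFn]
          have hfun : (⇑(Units.coeHom (Matrix (Fin n) (Fin n) ℂ)) ∘ u) = M :=
            funext fun j => hu j
          rw [hfun]
      _ = 1 := hMprod
  have hPU'top : PU' (p+1) = 1 := by
    apply Units.ext
    show (((List.ofFn u').take (p+1)).prod : (Matrix (Fin n) (Fin n) ℂ)ˣ).val = 1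
    have htake : (List.ofFn u').take (p+1) = List.ofFn u' := by
      apply List.take_of_length_le; simp
    rw [htake]
    calc ((List.ofFn u').prod).val
        = ((List.ofFn u').map (Units.coeHom (Matrix (Fin n) (Fin n) ℂ))).prod :=
          (map_list_prod (Units.coeHom _) _)
      _ = (List.ofFn M').prod := by
          rw [List.map_ofFn]
          have hfun : (⇑(Units.coeHom (Matrix (Fin n) (Fin n) ℂ)) ∘ u') = M' :=
            funext fun j => hu' j
          rw [hfun]
      _ = 1 := hM'prod
  -- the maps F t
  set F : ℕ → (Matrix (Fin n) (Fin n) ℂ →ₗ[ℂ] Matrix (Fin n) (Fin n) ℂ) := fun t =>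
    (LinearMap.mulLeft ℂ ((PU t).val)).comp (LinearMap.mulRight ℂ (((PU' t)⁻¹).val)) with hFdef
  have hF : ∀ t X, F t X = (PU t).val * (X * ((PU' t)⁻¹).val) := fun t X => rfl
  have hF0 : ∀ X, F 0 X = X := by intro X; rw [hF, hPU0, hPU'0]; simp
  have hFtop : ∀ X, F (p+1) X = X := by intro X; rw [hF, hPUtop, hPU'top]; simp
  -- Theta
  set Θ : (Fin (p+1) → Matrix (Fin n) (Fin n) ℂ) →ₗ[ℂ] Matrix (Fin n) (Fin n) ℂ :=
    ∑ j : Fin (p+1), (F ((j : ℕ) + 1) - F (j : ℕ)).comp (LinearMap.proj j) with hΘdef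
  have hΘ : ∀ v, Θ v = ∑ j : Fin (p+1), (F ((j : ℕ) + 1) (v j) - F (j : ℕ) (v j)) := by
    intro v
    rw [hΘdef]
    simp [LinearMap.sum_apply, LinearMap.comp_apply, LinearMap.sub_apply, LinearMap.proj_apply]
  have htel : ∀ X, (∑ j : Fin (p+1), (F ((j : ℕ) + 1) X - F (j : ℕ) X)) = 0 := by
    intro X
    rw [Fin.sum_univ_eq_sum_range (fun t => F (t + 1) X - F t X) (p+1),
      Finset.sum_range_sub (fun t => F t X), hFtop, hF0, sub_self]
  have hkerstep : ∀ (j : Fin (p+1)) (w : Matrix (Fin n) (Fin n) ℂ),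
      M j * w = w * M' j → F ((j : ℕ) + 1) w = F (j : ℕ) w := by
    intro j w hw
    rw [hF, hF, hPUsucc j, hPU'succ j, _root_.mul_inv_rev]
    have hw' : (u j).val * w = w * (u' j).val := by rw [hu, hu']; exact hw
    simp only [Units.val_mul, mul_assoc]
    congr 1
    rw [← mul_assoc, hw', mul_assoc, ← mul_assoc (u' j).val, Units.mul_inv, one_mul]
  have hK : ∀ (w : ∀ j : Fin (p+1), ↥(interMod (M j) (M' j))) (X : Matrix (Fin n) (Fin n) ℂ),
      Θ (fun j => (w j).val + X) = 0 := by
    intro w X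
    rw [hΘ]
    have hterm : ∀ j : Fin (p+1), F ((j : ℕ) + 1) ((w j).val + X) - F (j : ℕ) ((w j).val + X)
        = F ((j : ℕ) + 1) X - F (j : ℕ) X := by
      intro j
      rw [map_add, map_add, hkerstep j (w j).val (w j).2]
      abel
    rw [Finset.sum_congr rfl (fun j _ => hterm j), htel]
  -- the injection into ker Θ
  set Φ : ((∀ j : Fin (p+1), ↥(interMod (M j) (M' j))) × Matrix (Fin n) (Fin n) ℂ)
      →ₗ[ℂ] ↥(LinearMap.ker Θ) :=
    { toFun := fun z => ⟨fun j => (z.1 j).val + z.2, by rw [LinearMap.mem_ker]; exact hK z.1 z.2⟩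
      map_add' := by
        intro a b
        apply Subtype.ext
        funext j
        simp only [Prod.fst_add, Prod.snd_add, Pi.add_apply, Submodule.coe_add,
          AddSubmonoid.mk_add_mk]
        abel
      map_smul' := by
        intro c a
        apply Subtype.ext
        funext j
        simp only [Prod.smul_fst, Prod.smul_snd, Pi.smul_apply, Submodule.coe_smul,
          RingHom.id_apply, SetLike.val_smul, smul_add] } with hΦdef
  have hΦinj : Function.Injective Φ := by
    rw [injective_iff_map_eq_zero]
    intro z hz
    have hz' : ∀ j : Fin (p+1), (z.1 j).val + z.2 = 0 := by
      intro j
      have := congrFun (congrArg Subtype.val hz) j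
      exact this
    have hmem : ∀ j : Fin (p+1), M j * z.2 = z.2 * M' j := by
      intro j
      have hv : (z.1 j).val = -z.2 := eq_neg_of_add_eq_zero_left (hz' j)
      have hm := (z.1 j).2
      rw [mem_interMod] at hm
      rw [hv] at hm
      simpa [neg_mul, mul_neg, neg_inj] using hm
    have hX0 : z.2 = 0 := h1 z.2 hmem
    have hw0 : z.1 = 0 := by
      funext j
      apply Subtype.ext
      have := hz' j
      rw [hX0, add_zero] at this
      simpa using this
    exact Prod.ext hw0 hX0
  -- surjectivity of Θ
  have hrange : LinearMap.range Θ = ⊤ := by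
    by_contra hne
    have hlt : LinearMap.range Θ < ⊤ := lt_top_iff_ne_top.mpr hne
    obtain ⟨f, hf0, hfmap⟩ := Submodule.exists_dual_map_eq_bot_of_lt_top hlt inferInstance
    have hfvanish : ∀ v ∈ LinearMap.range Θ, f v = 0 := by
      intro v hv
      have : f v ∈ Submodule.map f (LinearMap.range Θ) := Submodule.mem_map_of_mem hv
      rwa [hfmap, Submodule.mem_bot] at this
    obtain ⟨Y, hY⟩ := trace_repr f
    have hsingle : ∀ (j : Fin (p+1)) (X : Matrix (Fin n) (Fin n) ℂ),
        F ((j : ℕ) + 1) X - F (j : ℕ) X ∈ LinearMap.range Θ := by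
      intro j X
      refine ⟨Pi.single j X, ?_⟩
      rw [hΘ, Finset.sum_eq_single j]
      · rw [Pi.single_eq_same]
      · intro b _ hb
        rw [Pi.single_eq_of_ne hb, map_zero, map_zero, sub_zero]
      · intro h; exact absurd (Finset.mem_univ j) h
    set G : ℕ → Matrix (Fin n) (Fin n) ℂ := fun t => ((PU' t)⁻¹).val * (Y * (PU t).val)
      with hGdef
    have htrace : ∀ (t : ℕ) (X : Matrix (Fin n) (Fin n) ℂ), f (F t X) = ((G t * X).trace) := by
      intro t X
      rw [hY, hF]
      calc (Y * ((PU t).val * (X * ((PU' t)⁻¹).val))).trace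
          = ((Y * (PU t).val) * (X * ((PU' t)⁻¹).val)).trace := by rw [mul_assoc]
        _ = ((X * ((PU' t)⁻¹).val) * (Y * (PU t).val)).trace := trace_mul_comm _ _
        _ = (X * (((PU' t)⁻¹).val * (Y * (PU t).val))).trace := by rw [mul_assoc]
        _ = ((((PU' t)⁻¹).val * (Y * (PU t).val)) * X).trace := trace_mul_comm _ _
        _ = ((G t * X).trace) := by rw [hGdef]
    have hGstep : ∀ j : Fin (p+1), G ((j : ℕ) + 1) = G (j : ℕ) := by
      intro j
      have hz : ∀ X, ((G ((j : ℕ) + 1) - G (j : ℕ)) * X).trace = 0 := by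
        intro X
        have hv := hfvanish _ (hsingle j X)
        rw [map_sub, htrace, htrace] at hv
        rw [sub_mul, Matrix.trace_sub]
        exact hv
      exact sub_eq_zero.mp (eq_zero_of_trace_mul _ hz)
    have hGconst : ∀ t, t ≤ p + 1 → G t = Y := by
      intro t
      induction t with
      | zero => intro _; rw [hGdef]; simp [hPU0, hPU'0]
      | succ s ih =>
        intro hs
        have hs' : s < p + 1 := hs
        have hstep := hGstep ⟨s, hs'⟩
        simp only [Fin.val_mk] at hstep
        rw [hstep]
        exact ih (le_of_lt hs')
    have hYint : ∀ j : Fin (p+1), Y * M j = M' j * Y := by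
      intro j
      have e1 : G (j : ℕ) = Y := hGconst _ (le_of_lt j.isLt)
      have e2 : G ((j : ℕ) + 1) = Y := hGconst _ (Nat.succ_le_of_lt j.isLt)
      have e3 : G ((j : ℕ) + 1) = (u' j)⁻¹.val * (G (j : ℕ) * (u j).val) := by
        rw [hGdef]
        simp only [hPUsucc j, hPU'succ j, _root_.mul_inv_rev, Units.val_mul, mul_assoc]
      rw [e1, e2] at e3
      have e4 : (u' j).val * Y = Y * (u j).val := by
        calc (u' j).val * Y = (u' j).val * ((u' j)⁻¹.val * (Y * (u j).val)) := by rw [← e3]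
          _ = Y * (u j).val := by rw [← mul_assoc, Units.mul_inv, one_mul]
      rw [hu, hu'] at e4
      exact e4.symm
    have hY0 : Y = 0 := h2 Y hYint
    apply hf0
    apply LinearMap.ext
    intro X
    rw [hY, hY0]
    simp
  -- dimension count
  have hcount := LinearMap.finrank_range_add_finrank_ker Θ
  have hrk1 : Module.finrank ℂ ↥(LinearMap.range Θ) = n * n := by
    rw [hrange, finrank_top, finrank_mat]
  have hdom : Module.finrank ℂ (Fin (p+1) → Matrix (Fin n) (Fin n) ℂ) = (p+1) * (n*n) := by
    rw [Module.finrank_pi_fintype]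
    simp [finrank_mat, Finset.sum_const, Finset.card_univ]
  have hker_ge : (∑ j : Fin (p+1), Module.finrank ℂ ↥(interMod (M j) (M' j))) + n * n
      ≤ Module.finrank ℂ ↥(LinearMap.ker Θ) := by
    have hle := LinearMap.finrank_le_finrank_of_injective hΦinj
    rw [Module.finrank_prod, Module.finrank_pi_fintype, finrank_mat] at hle
    exact hle
  rw [hrk1, hdom] at hcount
  have c1 : ((n:ℤ)*(n:ℤ)) + (Module.finrank ℂ ↥(LinearMap.ker Θ) : ℤ)
      = ((p:ℤ)+1)*((n:ℤ)*(n:ℤ)) := by exact_mod_cast hcount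
  have c2 : (∑ j : Fin (p+1), (Module.finrank ℂ ↥(interMod (M j) (M' j)) : ℤ)) + (n:ℤ)*(n:ℤ)
      ≤ (Module.finrank ℂ ↥(LinearMap.ker Θ) : ℤ) := by exact_mod_cast hker_ge
  rw [hdim] at c2
  nlinarith [c1, c2]

/-- **O. Gabber.** For conjugacy classes `C_1, …, C_{p+1} ⊂ GL(n,ℂ)` whose
index of rigidity equals `2`, i.e. `d_1 + … + d_{p+1} = 2n² − 2`, irreducible and reducible
`(p+1)`-tuples `(M_1, …, M_{p+1})` with `M_j ∈ C_j` and `M_1 ⋯ M_{p+1} = I` cannot coexist: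
if one such tuple is irreducible, then every such tuple is irreducible. -/
theorem no_coexistence_for_rigid_classes
    (n p : ℕ) (A : Fin (p + 1) → (Matrix (Fin n) (Fin n) ℂ)ˣ)
    (C : Fin (p + 1) → Set (Matrix (Fin n) (Fin n) ℂ))
    (hC : ∀ j, C j = {B | ∃ g : (Matrix (Fin n) (Fin n) ℂ)ˣ, B = g.val * (A j).val * g⁻¹.val})
    (d : Fin (p + 1) → ℕ)
    (hd : ∀ j, d j = n ^ 2 - Module.finrank ℂ (centSubmodule (↑(A j) : Matrix (Fin n) (Fin n) ℂ)))
    (hrigid : (∑ j, (d j : ℤ)) = 2 * n ^ 2 - 2)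
    (M M' : Fin (p + 1) → Matrix (Fin n) (Fin n) ℂ)
    (hM : (∀ j, M j ∈ C j) ∧ (List.ofFn M).prod = 1)
    (hM' : (∀ j, M' j ∈ C j) ∧ (List.ofFn M').prod = 1)
    (hirr : IsIrredTuple M) :
    IsIrredTuple M' := by
  -- extract conjugating units
  have hMex : ∀ j, ∃ g : (Matrix (Fin n) (Fin n) ℂ)ˣ,
      M j = g.val * (A j).val * g⁻¹.val := by
    intro j
    have := hM.1 j
    rwa [hC j] at this
  have hM'ex : ∀ j, ∃ g : (Matrix (Fin n) (Fin n) ℂ)ˣ,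
      M' j = g.val * (A j).val * g⁻¹.val := by
    intro j
    have := hM'.1 j
    rwa [hC j] at this
  choose gM hgM using hMex
  choose gM' hgM' using hM'ex
  -- units whose values are M j, M' j
  set u : Fin (p + 1) → (Matrix (Fin n) (Fin n) ℂ)ˣ := fun j => gM j * A j * (gM j)⁻¹ with hudef
  set u' : Fin (p + 1) → (Matrix (Fin n) (Fin n) ℂ)ˣ := fun j => gM' j * A j * (gM' j)⁻¹
    with hu'def
  have hu : ∀ j, (u j).val = M j := by
    intro j
    rw [hudef, hgM j]
    simp [Units.val_mul]
  have hu' : ∀ j, (u' j).val = M' j := by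
    intro j
    rw [hu'def, hgM' j]
    simp [Units.val_mul]
  -- dimension bookkeeping
  have hz_le : ∀ j, Module.finrank ℂ (centSubmodule ((A j).val)) ≤ n ^ 2 := by
    intro j
    have h := Submodule.finrank_le (centSubmodule ((A j).val))
    rw [finrank_mat] at h
    rw [pow_two]
    exact h
  have hterm : ∀ j, (Module.finrank ℂ ↥(interMod (M j) (M' j)) : ℤ)
      = ((n : ℤ) ^ 2 - (d j : ℤ)) := by
    intro j
    have hiso : Module.finrank ℂ ↥(interMod (M j) (M' j))
        = Module.finrank ℂ (centSubmodule ((A j).val)) := by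
      rw [hgM j, hgM' j]
      exact finrank_interMod' ((A j).val) (gM j) (gM' j)
    rw [hiso]
    have hdj : d j = n ^ 2 - Module.finrank ℂ (centSubmodule ((A j).val)) := hd j
    have hzz : Module.finrank ℂ (centSubmodule ((A j).val)) = n ^ 2 - d j := by
      rw [hdj, Nat.sub_sub_self (hz_le j)]
    rw [hzz, Nat.cast_sub (by rw [hdj]; exact Nat.sub_le _ _)]
    push_cast
    ring
  have hdim : (∑ j, (Module.finrank ℂ (interMod (M j) (M' j)) : ℤ))
      = ((p : ℤ) - 1) * (n * n) + 2 := by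
    rw [Finset.sum_congr rfl (fun j _ => hterm j), Finset.sum_sub_distrib,
      Finset.sum_const, Finset.card_univ, Fintype.card_fin, hrigid]
    ring
  -- get a nonzero intertwiner
  rcases exists_intertwiner n p M M' u u' hu hu' hM.2 hM'.2 hdim with
    ⟨X, hX0, hX⟩ | ⟨Y, hY0, hY⟩
  · -- X : V' → V intertwiner; its range is M-invariant, hence X is invertible
    have hrangeInv : ∀ j, ∀ v ∈ LinearMap.range X.mulVecLin, (M j).mulVec v ∈
        LinearMap.range X.mulVecLin := by
      rintro j v ⟨w, rfl⟩
      refine ⟨(M' j).mulVec w, ?_⟩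
      simp only [Matrix.mulVecLin_apply]
      rw [Matrix.mulVec_mulVec, Matrix.mulVec_mulVec, ← hX j]
    rcases hirr _ hrangeInv with hbot | htop
    · exfalso
      apply hX0
      have hX00 : X.mulVecLin = 0 := LinearMap.range_eq_bot.mp hbot
      ext i j
      have h1 := congrFun (congrArg (fun f => f.toFun) hX00) (Pi.single j 1)
      simp [Matrix.mulVecLin_apply] at h1
      have h2 := congrFun h1 i
      simpa [Matrix.mulVec_single] using h2
    · have hsurj : Function.Surjective X.mulVecLin := LinearMap.range_eq_top.mp htop
      have hinj : Function.Injective X.mulVecLin :=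
        (LinearMap.injective_iff_surjective).mpr hsurj
      intro W hW
      have hWmapInv : ∀ j, ∀ v ∈ W.map X.mulVecLin, (M j).mulVec v ∈ W.map X.mulVecLin := by
        rintro j v ⟨w, hw, rfl⟩
        refine ⟨(M' j).mulVec w, hW j w hw, ?_⟩
        simp only [Matrix.mulVecLin_apply]
        rw [Matrix.mulVec_mulVec, Matrix.mulVec_mulVec, ← hX j]
      rcases hirr _ hWmapInv with hbW | htW
      · left
        apply Submodule.map_injective_of_injective hinj
        rw [hbW, Submodule.map_bot]
      · right
        apply Submodule.map_injective_of_injective hinj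
        rw [htW, Submodule.map_top, htop]
  · -- Y : V → V' intertwiner; its kernel is M-invariant, hence Y is invertible
    have hkerInv : ∀ j, ∀ v ∈ LinearMap.ker Y.mulVecLin, (M j).mulVec v ∈
        LinearMap.ker Y.mulVecLin := by
      intro j v hv
      rw [LinearMap.mem_ker] at hv ⊢
      simp only [Matrix.mulVecLin_apply] at hv ⊢
      rw [Matrix.mulVec_mulVec, hY j, ← Matrix.mulVec_mulVec, hv, Matrix.mulVec_zero]
    rcases hirr _ hkerInv with hbot | htop
    · have hinj : Function.Injective Y.mulVecLin := by
        rw [← LinearMap.ker_eq_bot]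
        exact hbot
      have hsurj : Function.Surjective Y.mulVecLin :=
        (LinearMap.injective_iff_surjective).mp hinj
      intro W hW
      have hWcomapInv : ∀ j, ∀ v ∈ W.comap Y.mulVecLin, (M j).mulVec v ∈
          W.comap Y.mulVecLin := by
        intro j v hv
        rw [Submodule.mem_comap] at hv ⊢
        simp only [Matrix.mulVecLin_apply] at hv ⊢
        rw [Matrix.mulVec_mulVec, hY j, ← Matrix.mulVec_mulVec]
        exact hW j _ hv
      rcases hirr _ hWcomapInv with hbW | htW
      · left
        rw [← Submodule.map_comap_eq_of_surjective hsurj W, hbW, Submodule.map_bot]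
      · right
        rw [← Submodule.map_comap_eq_of_surjective hsurj W, htW, Submodule.map_top,
          LinearMap.range_eq_top]
        exact hsurj
    · exfalso
      apply hY0
      have hY00 : Y.mulVecLin = 0 := LinearMap.ker_eq_top.mp htop
      ext i j
      have h1 := congrFun (congrArg (fun f => f.toFun) hY00) (Pi.single j 1)
      simp [Matrix.mulVecLin_apply] at h1
      have h2 := congrFun h1 i
      simpa [Matrix.mulVec_single] using h2

end
end

section
/- In the setting of the quadruple of conjugacy classes C_1, …, C_4 below, suppose (M_1, …, M_4) ∈ 𝒱 with M_j = [[N_j, R_j],[0, N_j]] (2×2 blocks). Then the block R_4 is nilpotent of rank 1, and for j = 1,2,3 one has R_j = [N_j, Z_j] for some 2×2 matrix Z_j. -/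
open Matrix

set_option maxHeartbeats 1000000

noncomputable section

abbrev Mat2 := Matrix (Fin 2) (Fin 2) ℂ
abbrev Mat4 := Matrix (Fin 4) (Fin 4) ℂ

/-- The `4×4` matrix built from four `2×2` blocks. -/
def blk (A B C D : Mat2) : Mat4 :=
  Matrix.reindex finSumFinEquiv finSumFinEquiv (Matrix.fromBlocks A B C D)

/-- A `4×4` matrix with single eigenvalue `−1` and Jordan blocks of sizes `2,1,1`. -/
def J4 : Mat4 := -1 + Matrix.single 0 1 1

/-- The `2×2` Jordan block with eigenvalue `−1`. -/
def J2 : Mat2 := !![(-1 : ℂ), 1; 0, -1]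

/-- The variety `𝒱` of quadruples `(M_1,…,M_4)` with `M_j ∈ C_j` and `M_1M_2M_3M_4 = I`. -/
def Vset (C : Fin 4 → Set Mat4) : Set (Fin 4 → Mat4) :=
  {M | (∀ j, M j ∈ C j) ∧ M 0 * M 1 * M 2 * M 3 = 1}

/-- The stratum `𝒰 ⊂ 𝒱` of quadruples conjugate to a block-diagonal quadruple
`diag (N_j, P_j)` with `(P_j)` an irreducible quadruple (a direct sum of two
irreducible representations). -/
def Uset (C : Fin 4 → Set Mat4) (N : Fin 4 → Mat2) : Set (Fin 4 → Mat4) :=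
  {M | M ∈ Vset C ∧ ∃ (g : Mat4ˣ) (P : Fin 4 → Mat2), IsIrredTuple P ∧
    ∀ j, M j = g.val * blk (N j) 0 0 (P j) * g⁻¹.val}

/-- The stratum `𝒲 ⊂ 𝒱` of quadruples conjugate to a block upper-triangular quadruple
`[[N_j, R_j], [0, N_j]]` (a semi-direct sum of two copies of the rigid quadruple `(N_j)`). -/
def Wset (C : Fin 4 → Set Mat4) (N : Fin 4 → Mat2) : Set (Fin 4 → Mat4) :=
  {M | M ∈ Vset C ∧ ∃ (g : Mat4ˣ) (R : Fin 4 → Mat2),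
    ∀ j, M j = g.val * blk (N j) (R j) 0 (N j) * g⁻¹.val}

/-! ### Auxiliary lemmas -/

theorem aux_blk_mul (A B C D A' B' C' D' : Mat2) :
    blk A B C D * blk A' B' C' D' =
      blk (A*A'+B*C') (A*B'+B*D') (C*A'+D*C') (C*B'+D*D') := by
  simp [blk, Matrix.reindex_apply, ← Matrix.submatrix_mul_equiv _ _ _ _ finSumFinEquiv.symm,
    Matrix.fromBlocks_multiply]

theorem aux_blk_add (A B C D A' B' C' D' : Mat2) :
    blk A B C D + blk A' B' C' D' = blk (A+A') (B+B') (C+C') (D+D') := by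
  ext i j
  rcases h1 : (finSumFinEquiv.symm i : Fin 2 ⊕ Fin 2) with i' | i' <;>
    rcases h2 : (finSumFinEquiv.symm j : Fin 2 ⊕ Fin 2) with j' | j' <;>
    simp [blk, h1, h2]

theorem aux_blk_smul (a : ℂ) (A B C D : Mat2) :
    a • blk A B C D = blk (a•A) (a•B) (a•C) (a•D) := by
  ext i j
  rcases h1 : (finSumFinEquiv.symm i : Fin 2 ⊕ Fin 2) with i' | i' <;>
    rcases h2 : (finSumFinEquiv.symm j : Fin 2 ⊕ Fin 2) with j' | j' <;>
    simp [blk, h1, h2]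

theorem aux_blk_one : blk 1 0 0 1 = (1 : Mat4) := by
  simp [blk, Matrix.fromBlocks_one]

theorem aux_blk_zero : blk 0 0 0 0 = (0 : Mat4) := by
  simp [blk]

theorem aux_blk_inj {A B C D A' B' C' D' : Mat2} (h : blk A B C D = blk A' B' C' D') :
    A = A' ∧ B = B' ∧ C = C' ∧ D = D' := by
  have h2 : Matrix.fromBlocks A B C D = Matrix.fromBlocks A' B' C' D' :=
    (Matrix.reindex finSumFinEquiv finSumFinEquiv).injective h
  exact ⟨congrArg Matrix.toBlocks₁₁ h2, congrArg Matrix.toBlocks₁₂ h2,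
    congrArg Matrix.toBlocks₂₁ h2, congrArg Matrix.toBlocks₂₂ h2⟩

theorem aux_blk_sub (A B C D A' B' C' D' : Mat2) :
    blk A B C D - blk A' B' C' D' = blk (A-A') (B-B') (C-C') (D-D') := by
  ext i j
  rcases h1 : (finSumFinEquiv.symm i : Fin 2 ⊕ Fin 2) with i' | i' <;>
    rcases h2 : (finSumFinEquiv.symm j : Fin 2 ⊕ Fin 2) with j' | j' <;>
    simp [blk, h1, h2]

theorem aux_blk_sub_smul_one (A B D : Mat2) (c : ℂ) :
    blk A B 0 D - c • 1 = blk (A - c • 1) B 0 (D - c • 1) := by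
  have h1 : (c • (1:Mat4)) = blk (c•1) 0 0 (c•1) := by
    rw [← aux_blk_one, aux_blk_smul, smul_zero]
  rw [h1, aux_blk_sub, sub_zero, sub_zero]

theorem aux_blk_apply02 (A B C D : Mat2) : blk A B C D 0 2 = B 0 0 := by
  simp [blk, finSumFinEquiv]; rfl

theorem aux_blk_apply03 (A B C D : Mat2) : blk A B C D 0 3 = B 0 1 := by
  simp [blk, finSumFinEquiv]; rfl

theorem aux_blk_apply12 (A B C D : Mat2) : blk A B C D 1 2 = B 1 0 := by
  simp [blk, finSumFinEquiv]; rfl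

theorem aux_blk_apply13 (A B C D : Mat2) : blk A B C D 1 3 = B 1 1 := by
  simp [blk, finSumFinEquiv]; rfl

theorem aux_conj_poly {n : ℕ} (g : (Matrix (Fin n) (Fin n) ℂ)ˣ) (D : Matrix (Fin n) (Fin n) ℂ)
    (a b : ℂ) (h : (D - a • 1) * (D - b • 1) = 0) :
    (g.val * D * g⁻¹.val - a • 1) * (g.val * D * g⁻¹.val - b • 1) = 0 := by
  have e : ∀ c : ℂ, g.val * D * g⁻¹.val - c • 1 = g.val * (D - c • 1) * g⁻¹.val := by
    intro c
    rw [mul_sub, sub_mul, mul_smul_comm, smul_mul_assoc, mul_one, Units.mul_inv]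
  have key : ∀ X Y : Matrix (Fin n) (Fin n) ℂ,
      (g.val * X * g⁻¹.val) * (g.val * Y * g⁻¹.val) = g.val * (X * Y) * g⁻¹.val := by
    intro X Y
    calc (g.val * X * g⁻¹.val) * (g.val * Y * g⁻¹.val)
        = g.val * X * (g⁻¹.val * g.val) * Y * g⁻¹.val := by simp only [mul_assoc]
      _ = g.val * (X * Y) * g⁻¹.val := by
          rw [Units.inv_mul, mul_one]
          simp only [mul_assoc]
  rw [e, e, key, h]
  simp

theorem aux_diag2_poly (a b : ℂ) :
    (Matrix.diagonal ![a,b] - a • 1) * (Matrix.diagonal ![a,b] - b • 1) = 0 := by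
  ext i j
  fin_cases i <;> fin_cases j <;>
    simp [Matrix.mul_apply, Fin.sum_univ_two, Matrix.diagonal, Matrix.one_apply]

theorem aux_diag4_poly (a b : ℂ) :
    (Matrix.diagonal ![a,a,b,b] - a • (1:Mat4)) * (Matrix.diagonal ![a,a,b,b] - b • 1) = 0 := by
  ext i j
  fin_cases i <;> fin_cases j <;>
    simp [Matrix.mul_apply, Fin.sum_univ_four, Matrix.diagonal, Matrix.one_apply]

theorem aux_comm_sol (a b : ℂ) (hab : a ≠ b) (N R : Mat2)
    (hN : (N - a • 1) * (N - b • 1) = 0)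
    (hR : (N - a • 1) * R + R * (N - b • 1) = 0) :
    ∃ Z : Mat2, R = N * Z - Z * N := by
  have hd : a - b ≠ 0 := sub_ne_zero.mpr hab
  have h1 : R*N = a•R + b•R - N*R := by
    rw [sub_mul, mul_sub, smul_mul_assoc, one_mul, mul_smul_comm, mul_one] at hR
    linear_combination (norm := module) hR
  have h2 : N*N = a•N + b•N - (a*b)•1 := by
    rw [sub_mul, mul_sub, mul_sub, smul_mul_assoc, one_mul, mul_smul_comm, mul_one] at hN
    have hN' : N * N - b • N - (a • N - (a*b) • 1) = 0 := by
      simpa [smul_smul, mul_comm b a] using hN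
    linear_combination (norm := module) hN'
  have hNP : N*(N*R) = a•(N*R) + b•(N*R) - (a*b)•R := by
    rw [← mul_assoc, h2, sub_mul, add_mul, smul_mul_assoc, smul_mul_assoc, smul_mul_assoc, one_mul]
  have hPN : (N*R)*N = (a*b)•R := by
    rw [mul_assoc, h1, mul_sub, mul_add, mul_smul_comm, mul_smul_comm, hNP]
    abel
  refine ⟨(2/(a-b)^2) • (N*R) + (-(a+b)/(a-b)^2) • R, ?_⟩
  rw [mul_add, add_mul, mul_smul_comm, smul_mul_assoc, mul_smul_comm, smul_mul_assoc,
    hNP, hPN, h1]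
  have hd2 : (a-b)^2 ≠ 0 := pow_ne_zero _ hd
  match_scalars <;> (field_simp; ring)

theorem aux_rank_one_of (R : Mat2) (u v : Fin 2 → ℂ) (hR : R = vecMulVec u v) (h0 : R ≠ 0) :
    R.rank = 1 := by
  have hle : R.rank ≤ 1 := by
    rw [hR, Matrix.vecMulVec_eq (Fin 1)]
    calc (Matrix.replicateCol (Fin 1) u * Matrix.replicateRow (Fin 1) v).rank ≤ (Matrix.replicateCol (Fin 1) u).rank :=
          Matrix.rank_mul_le_left _ _
      _ ≤ Fintype.card (Fin 1) := Matrix.rank_le_card_width _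
      _ = 1 := by simp
  have hne : R.rank ≠ 0 := by
    intro h
    apply h0
    have hbot : LinearMap.range R.mulVecLin = ⊥ := by
      rw [Matrix.rank] at h
      exact Submodule.finrank_eq_zero.mp h
    have hz : R.mulVecLin = 0 := LinearMap.range_eq_bot.mp hbot
    ext i j
    have := congrFun (congrFun (congrArg DFunLike.coe hz) (Pi.single j 1)) i
    simpa [Matrix.mulVecLin, Matrix.mulVec_single] using this
  omega

theorem aux_trace_term (A N Z : Mat2) (h1 : A*N = -1) (h2 : N*A = -1) :
    Matrix.trace (A*(N*Z - Z*N)) = 0 := by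
  rw [mul_sub, ← mul_assoc, h1, ← mul_assoc, Matrix.trace_sub,
    Matrix.trace_mul_comm (A*Z) N, ← mul_assoc, h2]
  abel

theorem aux_std_entry (g h : Mat4) (i j : Fin 4) :
    (g * (Matrix.single (0:Fin 4) (1:Fin 4) (1:ℂ)) * h) i j = g i 0 * h 1 j := by
  simp [Matrix.mul_apply, Matrix.single, Fin.sum_univ_four]

theorem aux_vv_sq (u v : Fin 2 → ℂ) :
    vecMulVec u v * vecMulVec u v = (u 0 * v 0 + u 1 * v 1) • vecMulVec u v := by
  ext i j
  simp [Matrix.mul_apply, Fin.sum_univ_two, Matrix.vecMulVec_apply]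
  ring

/-- In the setting of the quadruple of conjugacy classes `C_1,…,C_4`,
if `(M_1,…,M_4) ∈ 𝒱` with `M_j = [[N_j, R_j], [0, N_j]]`, then `R_4` is nilpotent of
rank `1`, and for `j = 1,2,3` one has `R_j = [N_j, Z_j]` for some `2×2` matrix `Z_j`. -/
theorem R4_nilpotent_and_Rj_commutators
    (a b : Fin 3 → ℂ) (hab : ∀ j, a j ≠ b j)
    (ha0 : ∀ j, a j ≠ 0) (hb0 : ∀ j, b j ≠ 0)
    (hbasic : (∏ j, a j * b j) = 1)
    (hgen : ∀ (κ : ℕ) (α β : Fin 3 → ℕ), 1 ≤ κ → κ < 4 →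
      (∀ j, α j ≤ 2 ∧ β j ≤ 2 ∧ α j + β j = κ) →
      (∏ j, a j ^ α j * b j ^ β j) * (-1 : ℂ) ^ κ = 1 → ∀ j, α j = 1 ∧ β j = 1)
    (C : Fin 4 → Set Mat4)
    (hC : ∀ j : Fin 3, C j.castSucc =
      {X | ∃ g : Mat4ˣ, X = g.val * Matrix.diagonal ![a j, a j, b j, b j] * g⁻¹.val})
    (hC4 : C 3 = {X | ∃ g : Mat4ˣ, X = g.val * J4 * g⁻¹.val})
    (N : Fin 4 → Mat2)
    (hNirr : IsIrredTuple N)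
    (hNprod : N 0 * N 1 * N 2 * N 3 = 1)
    (hNdiag : ∀ j : Fin 3, ∃ g : Mat2ˣ,
      N j.castSucc = g.val * Matrix.diagonal ![a j, b j] * g⁻¹.val)
    (hN4 : N 3 = -1)
    (R : Fin 4 → Mat2)
    (hM : (fun j => blk (N j) (R j) 0 (N j)) ∈ Vset C) :
    IsNilpotent (R 3) ∧ (R 3).rank = 1 ∧
      ∀ j : Fin 3, ∃ Z : Mat2,
        R j.castSucc = N j.castSucc * Z - Z * N j.castSucc := by
  simp only [Vset, Set.mem_setOf_eq] at hM
  obtain ⟨hmem, hprod⟩ := hM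
  -- Part 3: the commutator representations.
  have hcomm : ∀ j : Fin 3, ∃ Z : Mat2,
      R j.castSucc = N j.castSucc * Z - Z * N j.castSucc := by
    intro j
    have hmemj := hmem j.castSucc
    rw [hC j] at hmemj
    obtain ⟨g, hg⟩ := hmemj
    have hpoly4 : (blk (N j.castSucc) (R j.castSucc) 0 (N j.castSucc) - a j • 1) *
        (blk (N j.castSucc) (R j.castSucc) 0 (N j.castSucc) - b j • 1) = 0 := by
      rw [hg]
      exact aux_conj_poly g _ _ _ (aux_diag4_poly (a j) (b j))
    obtain ⟨g2, hg2⟩ := hNdiag j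
    have hpolyN : (N j.castSucc - a j • 1) * (N j.castSucc - b j • 1) = 0 := by
      rw [hg2]
      exact aux_conj_poly g2 _ _ _ (aux_diag2_poly (a j) (b j))
    rw [aux_blk_sub_smul_one, aux_blk_sub_smul_one, aux_blk_mul, ← aux_blk_zero] at hpoly4
    have hoff := (aux_blk_inj hpoly4).2.1
    exact aux_comm_sol (a j) (b j) (hab j) _ _ hpolyN hoff
  -- cast the commutator representations down to explicit indices
  have e0 : ((0 : Fin 3).castSucc : Fin 4) = 0 := by decide
  have e1 : ((1 : Fin 3).castSucc : Fin 4) = 1 := by decide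
  have e2 : ((2 : Fin 3).castSucc : Fin 4) = 2 := by decide
  obtain ⟨Z0, hZ0⟩ := hcomm 0
  obtain ⟨Z1, hZ1⟩ := hcomm 1
  obtain ⟨Z2, hZ2⟩ := hcomm 2
  rw [e0] at hZ0
  rw [e1] at hZ1
  rw [e2] at hZ2
  -- invertibility of the N_j
  have huN : ∀ j : Fin 3, IsUnit (N j.castSucc) := by
    intro j
    obtain ⟨g, hg⟩ := hNdiag j
    rw [hg]
    refine (g.isUnit.mul ?_).mul g⁻¹.isUnit
    rw [Matrix.isUnit_iff_isUnit_det, Matrix.det_fin_two]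
    have hne : a j * b j ≠ 0 := mul_ne_zero (ha0 j) (hb0 j)
    simpa [Matrix.diagonal] using isUnit_iff_ne_zero.mpr hne
  have hu0 : IsUnit (N 0) := by have := huN 0; rwa [e0] at this
  have hu1 : IsUnit (N 1) := by have := huN 1; rwa [e1] at this
  have hu2 : IsUnit (N 2) := by have := huN 2; rwa [e2] at this
  -- cyclic products equal -1
  have h012 : N 0 * N 1 * N 2 = -1 := by
    rw [hN4, mul_neg_one] at hNprod
    exact neg_eq_iff_eq_neg.mp hNprod
  have h120 : N 1 * N 2 * N 0 = -1 := by
    obtain ⟨u0, hu0v⟩ := hu0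
    apply (Units.mul_right_inj u0).mp
    rw [hu0v]
    calc N 0 * (N 1 * N 2 * N 0) = (N 0 * N 1 * N 2) * N 0 := by
          simp only [mul_assoc]
      _ = N 0 * (-1) := by rw [h012]; simp [mul_neg_one, neg_one_mul]
  have h201 : N 2 * N 0 * N 1 = -1 := by
    obtain ⟨u01, hu01v⟩ := hu0.mul hu1
    apply (Units.mul_right_inj u01).mp
    rw [hu01v]
    calc N 0 * N 1 * (N 2 * N 0 * N 1) = (N 0 * N 1 * N 2) * (N 0 * N 1) := by
          simp only [mul_assoc]
      _ = N 0 * N 1 * (-1) := by rw [h012]; simp [mul_neg_one, neg_one_mul]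
  -- the off-diagonal block of the product relation
  rw [aux_blk_mul, aux_blk_mul, aux_blk_mul, ← aux_blk_one] at hprod
  simp only [mul_zero, zero_mul, add_zero, zero_add] at hprod
  have hS := (aux_blk_inj hprod).2.1
  -- hS : N 0 * N 1 * N 2 * R 3 + (N 0 * N 1 * R 2 + (N 0 * R 1 + R 0 * N 1) * N 2) * N 3 = 0
  rw [hN4, mul_neg_one, h012, neg_one_mul] at hS
  have hR3 : R 3 = -(N 0 * N 1 * R 2 + (N 0 * R 1 + R 0 * N 1) * N 2) := by
    rw [← neg_add, neg_eq_zero] at hS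
    exact eq_neg_of_add_eq_zero_left hS
  -- trace of R 3 is zero
  have ht : Matrix.trace (R 3) = 0 := by
    rw [hR3, hZ0, hZ1, hZ2]
    have t1 : Matrix.trace (N 0 * N 1 * (N 2 * Z2 - Z2 * N 2)) = 0 :=
      aux_trace_term (N 0 * N 1) (N 2) Z2 h012 (by rw [← mul_assoc]; exact h201)
    have t2 : Matrix.trace ((N 0 * (N 1 * Z1 - Z1 * N 1)) * N 2) = 0 := by
      rw [Matrix.trace_mul_comm, ← mul_assoc]
      exact aux_trace_term (N 2 * N 0) (N 1) Z1 h201 (by rw [← mul_assoc]; exact h120)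
    have t3 : Matrix.trace (((N 0 * Z0 - Z0 * N 0) * N 1) * N 2) = 0 := by
      rw [mul_assoc, Matrix.trace_mul_comm]
      exact aux_trace_term (N 1 * N 2) (N 0) Z0 h120 (by rw [← mul_assoc]; exact h012)
    rw [Matrix.trace_neg, Matrix.trace_add, add_mul, Matrix.trace_add, t1, t2, t3]
    simp
  -- the Jordan-class condition on M_4
  have hmem3 := hmem 3
  rw [hC4] at hmem3
  obtain ⟨g, hg⟩ := hmem3
  have hblk : blk 0 (R 3) 0 0
      = g.val * (Matrix.single (0:Fin 4) (1:Fin 4) (1:ℂ)) * g⁻¹.val := by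
    have hg' : blk (N 3) (R 3) 0 (N 3) = g.val * J4 * g⁻¹.val := hg
    rw [hN4] at hg'
    have hE : g.val * J4 * g⁻¹.val
        = -1 + g.val * (Matrix.single (0:Fin 4) (1:Fin 4) (1:ℂ)) * g⁻¹.val := by
      rw [J4, mul_add, add_mul, mul_neg_one]
      congr 1
      rw [neg_mul, Units.mul_inv]
    rw [hE] at hg'
    have hadd : blk (-1) (R 3) 0 (-1) + 1
        = g.val * (Matrix.single (0:Fin 4) (1:Fin 4) (1:ℂ)) * g⁻¹.val := by
      rw [hg']; abel
    rw [← aux_blk_one, aux_blk_add] at hadd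
    simpa using hadd
  have key : ∀ i j, blk 0 (R 3) 0 0 i j = g.val i 0 * g⁻¹.val 1 j := by
    intro i j
    rw [hblk]
    exact aux_std_entry _ _ i j
  set u : Fin 2 → ℂ := ![g.val 0 0, g.val 1 0] with hu
  set v : Fin 2 → ℂ := ![g⁻¹.val 1 2, g⁻¹.val 1 3] with hv
  have k00 := key 0 2; rw [aux_blk_apply02] at k00
  have k01 := key 0 3; rw [aux_blk_apply03] at k01
  have k10 := key 1 2; rw [aux_blk_apply12] at k10
  have k11 := key 1 3; rw [aux_blk_apply13] at k11
  have hRvv : R 3 = vecMulVec u v := by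
    ext i j
    fin_cases i <;> fin_cases j <;>
      simp only [Matrix.vecMulVec_apply, hu, hv, Matrix.cons_val_zero, Matrix.cons_val_one,
        Matrix.head_cons, Fin.isValue] <;>
      first
        | exact k00 | exact k01 | exact k10 | exact k11
  have hR3ne : R 3 ≠ 0 := by
    intro h0
    have hE0 : g.val * (Matrix.single (0:Fin 4) (1:Fin 4) (1:ℂ)) * g⁻¹.val = 0 := by
      rw [← hblk, h0, aux_blk_zero]
    have hE1 : (Matrix.single (0:Fin 4) (1:Fin 4) (1:ℂ)) = 0 := by
      calc (Matrix.single (0:Fin 4) (1:Fin 4) (1:ℂ))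
          = (g⁻¹.val * g.val) * (Matrix.single (0:Fin 4) (1:Fin 4) (1:ℂ))
              * (g⁻¹.val * g.val) := by rw [Units.inv_mul]; simp
        _ = g⁻¹.val * (g.val * (Matrix.single (0:Fin 4) (1:Fin 4) (1:ℂ)) * g⁻¹.val)
              * g.val := by simp only [mul_assoc]
        _ = 0 := by rw [hE0]; simp
    have := congrFun (congrFun hE1 0) 1
    simp [Matrix.single] at this
  have htuv : u 0 * v 0 + u 1 * v 1 = 0 := by
    rw [hRvv, Matrix.trace_fin_two, Matrix.vecMulVec_apply, Matrix.vecMulVec_apply] at ht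
    exact ht
  have hsq : R 3 * R 3 = 0 := by
    rw [hRvv, aux_vv_sq, htuv, zero_smul]
  exact ⟨⟨2, by rw [pow_two]; exact hsq⟩, aux_rank_one_of (R 3) u v hRvv hR3ne, hcomm⟩
end
end

section
/- In the setting below, the space 𝒯 = {(T_1,T_2,T_3) : T_j = L_jY_j − Y_jB_j for some Y_j ∈ gl(2,ℂ), and T_1B_2B_3 + L_1T_2B_3 + L_1L_2T_3 = 0} has dimension 5, and its subspace 𝒬 = {(L_1Y − YB_1, L_2Y − YB_2, L_3Y − YB_3) : Y ∈ gl(2,ℂ)} has dimension 4; in particular dim(𝒯/𝒬) = 1. -/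
open Matrix

set_option maxHeartbeats 1000000
set_option synthInstance.maxHeartbeats 1000000

noncomputable section

/-- The Sylvester map `Y ↦ L Y − Y B`. -/
def sylv (L B : Mat2) : Mat2 →ₗ[ℂ] Mat2 where
  toFun Y := L * Y - Y * B
  map_add' x y := by
    simp only [mul_add, add_mul]
    abel
  map_smul' c x := by
    simp only [mul_smul_comm, smul_mul_assoc, smul_sub, RingHom.id_apply]

/-- The linear map `(T_1,T_2,T_3) ↦ T_1B_2B_3 + L_1T_2B_3 + L_1L_2T_3`. -/
def psiMap (L B : Fin 3 → Mat2) : (Fin 3 → Mat2) →ₗ[ℂ] Mat2 where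
  toFun T := T 0 * (B 1 * B 2) + L 0 * T 1 * B 2 + L 0 * L 1 * T 2
  map_add' x y := by
    simp only [Pi.add_apply, add_mul, mul_add]
    abel
  map_smul' c x := by
    simp only [Pi.smul_apply, smul_mul_assoc, mul_smul_comm, RingHom.id_apply, smul_add]

/-- The linear map `Y ↦ (L_1Y − YB_1, L_2Y − YB_2, L_3Y − YB_3)`. -/
def qMap (L B : Fin 3 → Mat2) : Mat2 →ₗ[ℂ] (Fin 3 → Mat2) where
  toFun Y := fun j => L j * Y - Y * B j
  map_add' x y := by
    funext j
    simp only [Pi.add_apply, mul_add, add_mul]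
    abel
  map_smul' c x := by
    funext j
    simp only [Pi.smul_apply, mul_smul_comm, smul_mul_assoc, smul_sub, RingHom.id_apply]

/-- The space `𝒯` of triples `(T_1,T_2,T_3)` with `T_j = L_jY_j − Y_jB_j` for some `Y_j`
and `T_1B_2B_3 + L_1T_2B_3 + L_1L_2T_3 = 0`. -/
def Tspace (L B : Fin 3 → Mat2) : Submodule ℂ (Fin 3 → Mat2) :=
  (Submodule.pi Set.univ fun j => LinearMap.range (sylv (L j) (B j))) ⊓
    LinearMap.ker (psiMap L B)

/-- The space `𝒬 = {(L_1Y − YB_1, L_2Y − YB_2, L_3Y − YB_3) | Y ∈ gl(2,ℂ)}`. -/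
def Qspace (L B : Fin 3 → Mat2) : Submodule ℂ (Fin 3 → Mat2) :=
  LinearMap.range (qMap L B)


open Module

section Aux

/- trace test lemma -/

lemma myTrace_std (N : Mat2) (i j : Fin 2) :
    ((Matrix.single i j (1:ℂ)) * N).trace = N j i := by
  rw [Matrix.trace]
  rw [Fin.sum_univ_two]
  fin_cases i <;> fin_cases j <;>
    simp [Matrix.diag, Matrix.mul_apply, Matrix.single, Fin.sum_univ_two]

lemma eq_zero_of_traces (N : Mat2) (h : ∀ M : Mat2, (M * N).trace = 0) : N = 0 := by
  ext i j
  have := h (Matrix.single j i 1)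
  rw [myTrace_std] at this
  simpa using this

lemma exists_trace_ann (S : Submodule ℂ Mat2) (hS : S ≠ ⊤) :
    ∃ N : Mat2, N ≠ 0 ∧ ∀ M ∈ S, (M * N).trace = 0 := by
  obtain ⟨φ, hφ0, hφ⟩ := S.exists_dual_map_eq_bot_of_lt_top (lt_top_iff_ne_top.mpr hS)
    inferInstance
  -- trace pairing map
  let ρ : Mat2 →ₗ[ℂ] Module.Dual ℂ Mat2 :=
    (LinearMap.mk₂ ℂ (fun M N : Mat2 => (M * N).trace)
      (fun a b c => by simp [add_mul])
      (fun a b c => by simp [Matrix.smul_mul])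
      (fun a b c => by simp [mul_add])
      (fun a b c => by simp [Matrix.mul_smul])).flip
  have hinj : Function.Injective ρ := by
    rw [← LinearMap.ker_eq_bot, Submodule.eq_bot_iff]
    intro N hN
    apply eq_zero_of_traces
    intro M
    have := LinearMap.congr_fun (LinearMap.mem_ker.mp hN ▸ rfl : ρ N = 0) M
    simpa [ρ] using this
  have hsurj : Function.Surjective ρ :=
    (LinearMap.injective_iff_surjective_of_finrank_eq_finrank
      (Subspace.dual_finrank_eq).symm).mp hinj
  obtain ⟨N, hN⟩ := hsurj φ
  refine ⟨N, ?_, ?_⟩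
  · rintro rfl; exact hφ0 (by rw [← hN]; simp)
  · intro M hM
    have : φ M = 0 := by
      have : φ M ∈ S.map φ := Submodule.mem_map_of_mem hM
      rw [hφ] at this
      simpa using this
    rw [← hN] at this
    exact this

/- rank one factorization of singular nonzero 2x2 matrix -/
lemma rank_one_fact (P : Mat2) (h0 : P ≠ 0) (hd : P.det = 0) :
    ∃ x y : Fin 2 → ℂ, x ≠ 0 ∧ y ≠ 0 ∧ P = vecMulVec x y := by
  have hex : ∃ i j, P i j ≠ 0 := by
    by_contra h
    push_neg at h
    exact h0 (by ext i j; simpa using h i j)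
  obtain ⟨i0, j0, hP0⟩ := hex
  rw [Matrix.det_fin_two] at hd
  have key : ∀ i j, P i j * P i0 j0 = P i j0 * P i0 j := by
    intro i j
    fin_cases i <;> fin_cases i0 <;> fin_cases j <;> fin_cases j0 <;>
      simp only [Fin.mk_zero, Fin.mk_one, Fin.isValue] <;>
      first
        | ring1
        | linear_combination P 0 0 * hd
        | linear_combination P 0 1 * hd
        | linear_combination P 1 0 * hd
        | linear_combination P 1 1 * hd
        | linear_combination hd
        | linear_combination -hd
        | linear_combination (-(P 0 0)) * hd
        | linear_combination (-(P 0 1)) * hd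
        | linear_combination (-(P 1 0)) * hd
        | linear_combination (-(P 1 1)) * hd
  refine ⟨fun i => P i j0, fun j => P i0 j / P i0 j0, ?_, ?_, ?_⟩
  · intro h
    exact hP0 (by simpa using congrFun h i0)
  · intro h
    have := congrFun h j0
    simp only [Pi.zero_apply] at this
    rw [div_eq_zero_iff] at this
    tauto
  · ext i j
    rw [vecMulVec_apply]
    field_simp
    rw [key i j]

lemma outer_intertwine {x y : Fin 2 → ℂ} (hx : x ≠ 0) (hy : y ≠ 0) (L B : Mat2)
    (h : vecMulVec x y * L = B * vecMulVec x y) :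
    ∃ μ : ℂ, y ᵥ* L = μ • y ∧ B *ᵥ x = μ • x := by
  have hentry : ∀ i j, x i * (y ᵥ* L) j = (B *ᵥ x) i * y j := by
    intro i j
    have := congrFun (congrFun h i) j
    simp only [Matrix.mul_apply, Matrix.vecMulVec_apply, Matrix.vecMul, Matrix.mulVec,
      dotProduct, Finset.sum_mul, Finset.mul_sum] at this ⊢
    simp only [Fin.sum_univ_two] at this ⊢
    linear_combination this
  obtain ⟨i0, hi0⟩ : ∃ i, x i ≠ 0 := by
    by_contra hc; push_neg at hc; exact hx (funext fun i => hc i)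
  obtain ⟨j0, hj0⟩ : ∃ j, y j ≠ 0 := by
    by_contra hc; push_neg at hc; exact hy (funext fun j => hc j)
  refine ⟨(B *ᵥ x) i0 / x i0, ?_, ?_⟩
  · funext j
    have := hentry i0 j
    simp only [Pi.smul_apply, smul_eq_mul]
    rw [div_mul_eq_mul_div, eq_div_iff hi0]
    linear_combination this
  · funext i
    have h1 := hentry i j0
    have h2 := hentry i0 j0
    simp only [Pi.smul_apply, smul_eq_mul]
    rw [div_mul_eq_mul_div, eq_div_iff hi0]
    apply mul_right_cancel₀ hj0
    first
      | linear_combination x i * h2 - x i0 * h1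
      | linear_combination x i0 * h1 - x i * h2

lemma vecMul_eig_ne_zero {y : Fin 2 → ℂ} {μ : ℂ} (hy : y ≠ 0) {A : Mat2} (hA : IsUnit A)
    (h : y ᵥ* A = μ • y) : μ ≠ 0 := by
  rintro rfl
  obtain ⟨u, hu⟩ := hA
  apply hy
  have : y ᵥ* (A * (↑u⁻¹ : Mat2)) = 0 := by
    rw [← Matrix.vecMul_vecMul, h]
    simp
  rw [← hu, ← Units.val_mul] at this
  simpa using this

lemma mulVec_eig_ne_zero {x : Fin 2 → ℂ} {μ : ℂ} (hx : x ≠ 0) {A : Mat2} (hA : IsUnit A)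
    (h : A *ᵥ x = μ • x) : μ ≠ 0 := by
  rintro rfl
  obtain ⟨u, hu⟩ := hA
  apply hx
  have : ((↑u⁻¹ : Mat2) * A) *ᵥ x = 0 := by
    rw [← Matrix.mulVec_mulVec, h]
    simp
  rw [← hu, ← Units.val_mul] at this
  simpa using this

lemma matIsUnit_left {A B : Mat2} (h : A * B = 1) : IsUnit A := by
  rw [Matrix.isUnit_iff_isUnit_det]
  exact IsUnit.of_mul_eq_one _ (by rw [← Matrix.det_mul, h, Matrix.det_one])

lemma matIsUnit_right {A B : Mat2} (h : A * B = 1) : IsUnit B :=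
  matIsUnit_left (mul_eq_one_comm.mp h)

lemma fin3_cases (j : Fin 3) : j = 0 ∨ j = 1 ∨ j = 2 := by
  fin_cases j <;> simp

lemma irred_no_left_eig (L : Fin 3 → Mat2) (hirr : IsIrredTuple L)
    (hprod : L 0 * L 1 * L 2 = 1) {y : Fin 2 → ℂ} (hy : y ≠ 0) {μ ν : ℂ}
    (hμ : μ ≠ 0) (hν : ν ≠ 0)
    (h0 : y ᵥ* L 0 = μ • y) (h1 : y ᵥ* L 1 = ν • y) : False := by
  have h2 : y ᵥ* L 2 = (μ * ν)⁻¹ • y := by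
    have key : y ᵥ* (L 0 * L 1 * L 2) = y := by rw [hprod]; simp
    rw [← Matrix.vecMul_vecMul, ← Matrix.vecMul_vecMul, h0, Matrix.smul_vecMul, h1,
      smul_smul, Matrix.smul_vecMul] at key
    have h3 := congrArg (fun z => (μ * ν)⁻¹ • z) key
    rw [smul_smul, inv_mul_cancel₀ (mul_ne_zero hμ hν), one_smul] at h3
    exact h3
  let φ : (Fin 2 → ℂ) →ₗ[ℂ] ℂ :=
    { toFun := fun v => y ⬝ᵥ v
      map_add' := fun a b => dotProduct_add y a b
      map_smul' := fun c a => by simp }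
  have hinv : ∀ j, ∀ v ∈ LinearMap.ker φ, (L j).mulVec v ∈ LinearMap.ker φ := by
    intro j v hv
    rw [LinearMap.mem_ker] at hv ⊢
    have hdp : ∀ A : Mat2, φ (A *ᵥ v) = (y ᵥ* A) ⬝ᵥ v := fun A => dotProduct_mulVec y A v
    have hv' : y ⬝ᵥ v = 0 := hv
    rcases fin3_cases j with rfl | rfl | rfl
    · rw [hdp, h0, smul_dotProduct, hv', smul_zero]
    · rw [hdp, h1, smul_dotProduct, hv', smul_zero]
    · rw [hdp, h2, smul_dotProduct, hv', smul_zero]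
  rcases hirr (LinearMap.ker φ) hinv with hbot | htop
  · -- the vector ![y 1, -y 0] is a nonzero element of the kernel
    have hmem : (![y 1, -y 0] : Fin 2 → ℂ) ∈ LinearMap.ker φ := by
      rw [LinearMap.mem_ker]
      show y ⬝ᵥ ![y 1, -y 0] = 0
      simp [dotProduct, Fin.sum_univ_two]
      ring
    rw [hbot, Submodule.mem_bot] at hmem
    obtain ⟨i, hi⟩ : ∃ i, y i ≠ 0 := by
      by_contra hc; push_neg at hc; exact hy (funext fun i => hc i)
    fin_cases i
    · exact hi (by simpa using (congrFun hmem 1 : _))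
    · have := congrFun hmem 0
      simp at this
      exact hi this
  · obtain ⟨i, hi⟩ : ∃ i, y i ≠ 0 := by
      by_contra hc; push_neg at hc; exact hy (funext fun i => hc i)
    have hmem : (Pi.single i 1 : Fin 2 → ℂ) ∈ LinearMap.ker φ := by rw [htop]; trivial
    rw [LinearMap.mem_ker] at hmem
    have : y ⬝ᵥ Pi.single i 1 = y i := by simp [dotProduct_single]
    rw [show φ (Pi.single i 1) = y ⬝ᵥ Pi.single i 1 from rfl, this] at hmem
    exact hi hmem

lemma irred_no_right_eig (L : Fin 3 → Mat2) (hirr : IsIrredTuple L)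
    (hprod : L 0 * L 1 * L 2 = 1) {x : Fin 2 → ℂ} (hx : x ≠ 0) {μ ν : ℂ}
    (hμ : μ ≠ 0) (hν : ν ≠ 0)
    (h0 : L 0 *ᵥ x = μ • x) (h1 : L 1 *ᵥ x = ν • x) : False := by
  have hunit : IsUnit (L 0 * L 1) := matIsUnit_left hprod
  have h2 : L 2 *ᵥ x = (μ * ν)⁻¹ • x := by
    obtain ⟨u, hu⟩ := hunit
    have key : (L 0 * L 1) *ᵥ (L 2 *ᵥ x) = (L 0 * L 1) *ᵥ ((μ * ν)⁻¹ • x) := by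
      rw [Matrix.mulVec_mulVec, hprod, Matrix.one_mulVec]
      rw [Matrix.mulVec_smul, ← Matrix.mulVec_mulVec, h1,
        Matrix.mulVec_smul, h0, smul_smul, smul_smul]
      rw [show (μ * ν)⁻¹ * ν * μ = 1 by field_simp [mul_comm], one_smul]
    rw [← hu] at key
    have key2 := congrArg (fun v => (↑u⁻¹ : Mat2) *ᵥ v) key
    simp only [Matrix.mulVec_mulVec, ← mul_assoc, Units.inv_mul, one_mul, Matrix.one_mulVec] at key2
    exact key2
  have hinv : ∀ j, ∀ v ∈ Submodule.span ℂ {x}, (L j).mulVec v ∈ Submodule.span ℂ {x} := by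
    intro j v hv
    rw [Submodule.mem_span_singleton] at hv ⊢
    obtain ⟨c, rfl⟩ := hv
    rcases fin3_cases j with rfl | rfl | rfl
    · exact ⟨c * μ, by rw [Matrix.mulVec_smul, h0, smul_smul]⟩
    · exact ⟨c * ν, by rw [Matrix.mulVec_smul, h1, smul_smul]⟩
    · exact ⟨c * (μ * ν)⁻¹, by rw [Matrix.mulVec_smul, h2, smul_smul]⟩
  rcases hirr (Submodule.span ℂ {x}) hinv with hbot | htop
  · rw [Submodule.span_singleton_eq_bot] at hbot
    exact hx hbot
  · have h2' : finrank ℂ (Submodule.span ℂ ({x} : Set (Fin 2 → ℂ))) = 2 := by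
      rw [htop, finrank_top]
      simp
    have hle : finrank ℂ (Submodule.span ℂ ({x} : Set (Fin 2 → ℂ))) = 1 :=
      finrank_span_singleton hx
    omega

/-- conjugation-type linear equivalence `Y ↦ e Y f` -/
def conjLR (e f : Mat2ˣ) : Mat2 ≃ₗ[ℂ] Mat2 where
  toFun Y := e.val * Y * f.val
  invFun Y := e⁻¹.val * Y * f⁻¹.val
  map_add' x y := by simp [mul_add, add_mul]
  map_smul' c x := by simp [mul_smul_comm, smul_mul_assoc]
  left_inv Y := by
    simp only [← mul_assoc]
    rw [Units.inv_mul, one_mul, mul_assoc, Units.mul_inv, mul_one]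
  right_inv Y := by
    simp only [← mul_assoc]
    rw [Units.mul_inv, one_mul, mul_assoc, Units.inv_mul, mul_one]

lemma sylv_conj (Da Db : Mat2) (e f : Mat2ˣ) :
    sylv (e.val * Da * e⁻¹.val) (f.val * Db * f⁻¹.val) =
      ((conjLR e f⁻¹).toLinearMap.comp (sylv Da Db)).comp (conjLR e⁻¹ f).toLinearMap := by
  apply LinearMap.ext
  intro Y
  show e.val * Da * e⁻¹.val * Y - Y * (f.val * Db * f⁻¹.val) =
    e.val * (Da * (e⁻¹.val * Y * f.val) - (e⁻¹.val * Y * f.val) * Db) * (f⁻¹ : Mat2ˣ).val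
  simp only [mul_sub, sub_mul, mul_assoc, Units.mul_inv_cancel_left, Units.inv_mul_cancel_left,
    Units.mul_inv, Units.inv_mul, mul_one, one_mul]

lemma ker_sylv_diag {p q r : ℂ} (hpq : p ≠ q) (hpr : p ≠ r) (hqr : q ≠ r) :
    LinearMap.ker (sylv (diagonal ![p, q]) (diagonal ![p, r])) =
      Submodule.span ℂ {Matrix.single (0 : Fin 2) (0 : Fin 2) (1 : ℂ)} := by
  apply le_antisymm
  · intro Y hY
    rw [LinearMap.mem_ker] at hY
    have hY2 : diagonal ![p, q] * Y - Y * diagonal ![p, r] = 0 := hY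
    have hY3 := sub_eq_zero.mp hY2
    have key : ∀ i j, (![p, q] i) * Y i j = Y i j * (![p, r] j) := by
      intro i j
      have := congrFun (congrFun hY3 i) j
      rwa [Matrix.diagonal_mul, Matrix.mul_diagonal] at this
    have h01 : Y 0 1 = 0 := by
      have hk := key 0 1
      simp only [Matrix.cons_val_zero, Matrix.cons_val_one, Matrix.head_cons] at hk
      have : (p - r) * Y 0 1 = 0 := by linear_combination hk
      rcases mul_eq_zero.mp this with h | h
      · exact absurd (sub_eq_zero.mp h) hpr
      · exact h
    have h10 : Y 1 0 = 0 := by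
      have hk := key 1 0
      simp only [Matrix.cons_val_zero, Matrix.cons_val_one, Matrix.head_cons] at hk
      have : (q - p) * Y 1 0 = 0 := by linear_combination hk
      rcases mul_eq_zero.mp this with h | h
      · exact absurd (sub_eq_zero.mp h) (Ne.symm hpq)
      · exact h
    have h11 : Y 1 1 = 0 := by
      have hk := key 1 1
      simp only [Matrix.cons_val_zero, Matrix.cons_val_one, Matrix.head_cons] at hk
      have : (q - r) * Y 1 1 = 0 := by linear_combination hk
      rcases mul_eq_zero.mp this with h | h
      · exact absurd (sub_eq_zero.mp h) hqr
      · exact h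
    rw [Submodule.mem_span_singleton]
    refine ⟨Y 0 0, ?_⟩
    ext i j
    fin_cases i <;> fin_cases j <;>
      simp [Matrix.single, h01, h10, h11]
  · rw [Submodule.span_le, Set.singleton_subset_iff]
    rw [SetLike.mem_coe, LinearMap.mem_ker]
    show diagonal ![p, q] * Matrix.single 0 0 1 - Matrix.single 0 0 1 * diagonal ![p, r] = 0
    ext i j
    fin_cases i <;> fin_cases j <;>
      simp [Matrix.single, Matrix.mul_apply, Fin.sum_univ_two, Matrix.diagonal]

lemma finrank_mat2 : finrank ℂ Mat2 = 4 := by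
  rw [Module.finrank_matrix]
  simp

lemma finrank_range_sylv {L B : Mat2} {p q r : ℂ} (e f : Mat2ˣ)
    (hL : L = e.val * diagonal ![p, q] * e⁻¹.val)
    (hB : B = f.val * diagonal ![p, r] * f⁻¹.val)
    (hpq : p ≠ q) (hpr : p ≠ r) (hqr : q ≠ r) :
    finrank ℂ (LinearMap.range (sylv L B)) = 3 := by
  subst hL hB
  rw [sylv_conj]
  rw [LinearMap.range_comp, LinearEquiv.range, Submodule.map_top, LinearMap.range_comp,
    LinearEquiv.finrank_map_eq]
  have hker : finrank ℂ (LinearMap.ker (sylv (diagonal ![p, q]) (diagonal ![p, r]))) = 1 := by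
    rw [ker_sylv_diag hpq hpr hqr]
    apply finrank_span_singleton
    intro h
    have := congrFun (congrFun h 0) 0
    simp [Matrix.single] at this
  have hrn := LinearMap.finrank_range_add_finrank_ker (sylv (diagonal ![p, q]) (diagonal ![p, r]))
  rw [hker, finrank_mat2] at hrn
  omega

/-- `Submodule.pi Set.univ p` is linearly equivalent to the direct product of the `p j`. -/
def piSubEquiv {n : ℕ} {M : Type*} [AddCommGroup M] [Module ℂ M]
    (p : Fin n → Submodule ℂ M) :
    (Submodule.pi Set.univ p : Submodule ℂ (Fin n → M)) ≃ₗ[ℂ] Π j, p j where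
  toFun x j := ⟨x.1 j, x.2 j (Set.mem_univ j)⟩
  invFun v := ⟨fun j => (v j).1, fun j _ => (v j).2⟩
  map_add' x y := rfl
  map_smul' c x := rfl
  left_inv x := rfl
  right_inv v := rfl

lemma finrank_pi_submodule {n : ℕ} {M : Type*} [AddCommGroup M] [Module ℂ M]
    [FiniteDimensional ℂ M] (p : Fin n → Submodule ℂ M) :
    finrank ℂ (Submodule.pi Set.univ p : Submodule ℂ (Fin n → M)) = ∑ j, finrank ℂ (p j) := by
  rw [(piSubEquiv p).finrank_eq]
  exact Module.finrank_pi_fintype ℂ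


lemma mul_vecMulVec (A : Mat2) (x y : Fin 2 → ℂ) :
    A * vecMulVec x y = vecMulVec (A *ᵥ x) y := by
  ext i j
  simp only [Matrix.mul_apply, Matrix.vecMulVec_apply, Matrix.mulVec, dotProduct,
    Fin.sum_univ_two]
  ring

lemma unit_of_triple {A B C : Mat2} (h : A * B * C = 1) :
    IsUnit A ∧ IsUnit B ∧ IsUnit C := by
  refine ⟨matIsUnit_left (by rw [mul_assoc] at h; exact h), ?_, matIsUnit_right h⟩
  have h2 : C * (A * B) = 1 := mul_eq_one_comm.mp h
  rw [← mul_assoc] at h2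
  exact matIsUnit_right h2

lemma u_inv_mul_eq (e : Mat2ˣ) (M : Mat2) : (↑(e⁻¹ * e) : Mat2) * M = M := by
  rw [inv_mul_cancel, Units.val_one, one_mul]

lemma trace_conj_diag (e : Mat2ˣ) (d : Fin 2 → ℂ) :
    (e.val * diagonal d * e⁻¹.val).trace = d 0 + d 1 := by
  rw [Matrix.trace_mul_comm, ← mul_assoc, ← Units.val_mul, u_inv_mul_eq, Matrix.trace_diagonal,
    Fin.sum_univ_two]

end Aux

/-- In the second example (eigenvalues `(a,a,b,c)`, `(f,f,g,h)`,
`(u,u,v,w)`, the only non-genericity relation being `abfguv = 1`; `(L_j)` and `(B_j)`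
irreducible non-equivalent triples of diagonalizable `2×2` matrices with
`L_1L_2L_3 = B_1B_2B_3 = I` and eigenvalues `(a,b),(f,g),(u,v)` resp. `(a,c),(f,h),(u,w)`),
one has `dim 𝒯 = 5` and `dim 𝒬 = 4`; in particular `dim (𝒯/𝒬) = 1`. -/
theorem dim_T_eq_five_and_dim_Q_eq_four
    (a b c f g h u v w : ℂ)
    (hdist : [a, b, c, f, g, h, u, v, w].Pairwise (· ≠ ·))
    (hbasic : a * b * f * g * u * v = 1)
    (hgen : ∀ (κ α₁ β₁ γ₁ α₂ β₂ γ₂ α₃ β₃ γ₃ : ℕ), 1 ≤ κ → κ < 4 →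
      α₁ ≤ 2 → β₁ ≤ 1 → γ₁ ≤ 1 → α₁ + β₁ + γ₁ = κ →
      α₂ ≤ 2 → β₂ ≤ 1 → γ₂ ≤ 1 → α₂ + β₂ + γ₂ = κ →
      α₃ ≤ 2 → β₃ ≤ 1 → γ₃ ≤ 1 → α₃ + β₃ + γ₃ = κ →
      a ^ α₁ * b ^ β₁ * c ^ γ₁ * f ^ α₂ * g ^ β₂ * h ^ γ₂ * u ^ α₃ * v ^ β₃ * w ^ γ₃ = 1 →
      α₁ = 1 ∧ β₁ = 1 ∧ γ₁ = 0 ∧ α₂ = 1 ∧ β₂ = 1 ∧ γ₂ = 0 ∧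
        α₃ = 1 ∧ β₃ = 1 ∧ γ₃ = 0)
    (L B : Fin 3 → Mat2)
    (hLirr : IsIrredTuple L) (hBirr : IsIrredTuple B)
    (hLprod : L 0 * L 1 * L 2 = 1) (hBprod : B 0 * B 1 * B 2 = 1)
    (hL0 : ∃ e : Mat2ˣ, L 0 = e.val * Matrix.diagonal ![a, b] * e⁻¹.val)
    (hL1 : ∃ e : Mat2ˣ, L 1 = e.val * Matrix.diagonal ![f, g] * e⁻¹.val)
    (hL2 : ∃ e : Mat2ˣ, L 2 = e.val * Matrix.diagonal ![u, v] * e⁻¹.val)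
    (hB0 : ∃ e : Mat2ˣ, B 0 = e.val * Matrix.diagonal ![a, c] * e⁻¹.val)
    (hB1 : ∃ e : Mat2ˣ, B 1 = e.val * Matrix.diagonal ![f, h] * e⁻¹.val)
    (hB2 : ∃ e : Mat2ˣ, B 2 = e.val * Matrix.diagonal ![u, w] * e⁻¹.val)
    (hneq : ¬ ∃ e : Mat2ˣ, ∀ j, B j = e.val * L j * e⁻¹.val) :
    Module.finrank ℂ (Tspace L B) = 5 ∧
    Module.finrank ℂ (Qspace L B) = 4 ∧
    Qspace L B ≤ Tspace L B ∧
    Module.finrank ℂ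
      (↥(Tspace L B) ⧸ Submodule.comap (Tspace L B).subtype (Qspace L B)) = 1 := by
  clear hbasic hgen
  simp only [List.pairwise_cons, List.mem_cons, List.mem_singleton, List.not_mem_nil,
    forall_eq_or_imp, forall_eq, List.Pairwise.nil] at hdist
  obtain ⟨⟨hab, hac, haf, hag, hah, hau, hav, haw⟩,
    ⟨hbc, hbf, hbg, hbh, hbu, hbv, hbw⟩,
    ⟨hcf, hcg, hch, hcu, hcv, hcw⟩,
    ⟨hfg, hfh, hfu, hfv, hfw⟩,
    ⟨hgh, hgu, hgv, hgw⟩,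
    ⟨hhu, hhv, hhw⟩,
    ⟨huv, huw, -⟩, ⟨hvw, -⟩, -⟩ := hdist
  clear haw hbw hcw hfw hgw hhw
  obtain ⟨e0, hL0⟩ := hL0
  obtain ⟨e1, hL1⟩ := hL1
  obtain ⟨e2, hL2⟩ := hL2
  obtain ⟨f0, hB0⟩ := hB0
  obtain ⟨f1, hB1⟩ := hB1
  obtain ⟨f2, hB2⟩ := hB2
  obtain ⟨hL0u, hL1u, hL2u⟩ := unit_of_triple hLprod
  obtain ⟨hB0u, hB1u, hB2u⟩ := unit_of_triple hBprod
  -- ======================== Part 1 : 𝒬 ≤ 𝒯 ========================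
  have hQT : Qspace L B ≤ Tspace L B := by
    rintro _ ⟨Y, rfl⟩
    rw [Tspace, Submodule.mem_inf]
    constructor
    · rw [Submodule.mem_pi]
      intro j _
      exact ⟨Y, rfl⟩
    · rw [LinearMap.mem_ker]
      show (L 0 * Y - Y * B 0) * (B 1 * B 2) + L 0 * (L 1 * Y - Y * B 1) * B 2 +
        L 0 * L 1 * (L 2 * Y - Y * B 2) = 0
      have expand : (L 0 * Y - Y * B 0) * (B 1 * B 2) + L 0 * (L 1 * Y - Y * B 1) * B 2 +
          L 0 * L 1 * (L 2 * Y - Y * B 2) = (L 0 * L 1 * L 2) * Y - Y * (B 0 * B 1 * B 2) := by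
        noncomm_ring
      rw [expand, hLprod, hBprod, one_mul, mul_one, sub_self]
  -- ======================== Part 2 : dim 𝒬 = 4 ========================
  have hQinj : Function.Injective (qMap L B) := by
    rw [← LinearMap.ker_eq_bot, Submodule.eq_bot_iff]
    intro Y hY
    rw [LinearMap.mem_ker] at hY
    have hrel : ∀ j, L j * Y = Y * B j := by
      intro j
      have := congrFun hY j
      exact sub_eq_zero.mp this
    by_contra hY0
    by_cases hYu : IsUnit Y
    · obtain ⟨uY, huY⟩ := hYu
      apply hneq
      refine ⟨uY⁻¹, fun j => ?_⟩
      have hj := hrel j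
      rw [← huY] at hj
      rw [inv_inv]
      calc B j = ↑uY⁻¹ * (↑uY * B j) := by rw [← mul_assoc, Units.inv_mul, one_mul]
        _ = ↑uY⁻¹ * (L j * ↑uY) := by rw [← hj]
        _ = ↑uY⁻¹ * L j * ↑uY := by rw [mul_assoc]
    · have hdet : Y.det = 0 := by
        by_contra hd
        exact hYu ((Matrix.isUnit_iff_isUnit_det Y).mpr (isUnit_iff_ne_zero.mpr hd))
      obtain ⟨x, y, hx, hy, hfac⟩ := rank_one_fact Y hY0 hdet
      have h0 : vecMulVec x y * B 0 = L 0 * vecMulVec x y := by rw [← hfac]; exact (hrel 0).symm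
      have h1 : vecMulVec x y * B 1 = L 1 * vecMulVec x y := by rw [← hfac]; exact (hrel 1).symm
      obtain ⟨μ, hμ1, hμ2⟩ := outer_intertwine hx hy (B 0) (L 0) h0
      obtain ⟨ν, hν1, hν2⟩ := outer_intertwine hx hy (B 1) (L 1) h1
      have hμ0 : μ ≠ 0 := mulVec_eig_ne_zero hx hL0u hμ2
      have hν0 : ν ≠ 0 := mulVec_eig_ne_zero hx hL1u hν2
      exact irred_no_right_eig L hLirr hLprod hx hμ0 hν0 hμ2 hν2
  have hQ4 : finrank ℂ (Qspace L B) = 4 := by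
    rw [Qspace, LinearMap.finrank_range_of_inj hQinj, finrank_mat2]
  -- ======================== Part 3 : dim U = 9 ========================
  set U : Submodule ℂ (Fin 3 → Mat2) :=
    Submodule.pi Set.univ fun j => LinearMap.range (sylv (L j) (B j)) with hUdef
  have hU9 : finrank ℂ U = 9 := by
    rw [hUdef, finrank_pi_submodule, Fin.sum_univ_three,
      finrank_range_sylv e0 f0 hL0 hB0 hab hac hbc,
      finrank_range_sylv e1 f1 hL1 hB1 hfg hfh hgh,
      finrank_range_sylv e2 f2 hL2 hB2 huv huw hvw]
  -- ================== Part 4 : ψ restricted to U is surjective ==================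
  have hsurj : LinearMap.range ((psiMap L B).comp U.subtype) = ⊤ := by
    by_contra hne
    obtain ⟨N, hN0, hann⟩ := exists_trace_ann _ hne
    have htest : ∀ T : Fin 3 → Mat2, T ∈ U → ((psiMap L B) T * N).trace = 0 := by
      intro T hT
      exact hann _ ⟨⟨T, hT⟩, rfl⟩
    have hsingle : ∀ (k : Fin 3) (Y : Mat2), Pi.single k (sylv (L k) (B k) Y) ∈ U := by
      intro k Y
      rw [hUdef, Submodule.mem_pi]
      intro j _
      by_cases hjk : j = k
      · subst hjk; rw [Pi.single_eq_same]; exact ⟨Y, rfl⟩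
      · rw [Pi.single_eq_of_ne hjk]; exact Submodule.zero_mem _
    -- relation from the first slot
    have rel0 : ∀ Y : Mat2, ((L 0 * Y - Y * B 0) * (B 1 * B 2) * N).trace = 0 := by
      intro Y
      have := htest _ (hsingle 0 Y)
      have hψ : (psiMap L B) (Pi.single 0 (sylv (L 0) (B 0) Y)) =
          (L 0 * Y - Y * B 0) * (B 1 * B 2) := by
        show (Pi.single 0 (sylv (L 0) (B 0) Y) : Fin 3 → Mat2) 0 * (B 1 * B 2) +
          L 0 * (Pi.single 0 (sylv (L 0) (B 0) Y) : Fin 3 → Mat2) 1 * B 2 +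
          L 0 * L 1 * (Pi.single 0 (sylv (L 0) (B 0) Y) : Fin 3 → Mat2) 2 =
          (L 0 * Y - Y * B 0) * (B 1 * B 2)
        rw [Pi.single_eq_same, Pi.single_eq_of_ne (by decide), Pi.single_eq_of_ne (by decide)]
        show (L 0 * Y - Y * B 0) * (B 1 * B 2) + L 0 * 0 * B 2 + L 0 * L 1 * 0 =
          (L 0 * Y - Y * B 0) * (B 1 * B 2)
        rw [mul_zero, mul_zero, zero_mul, add_zero, add_zero]
      rwa [hψ] at this
    have rel1 : ∀ Y : Mat2, (L 0 * (L 1 * Y - Y * B 1) * B 2 * N).trace = 0 := by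
      intro Y
      have := htest _ (hsingle 1 Y)
      have hψ : (psiMap L B) (Pi.single 1 (sylv (L 1) (B 1) Y)) =
          L 0 * (L 1 * Y - Y * B 1) * B 2 := by
        show (Pi.single 1 (sylv (L 1) (B 1) Y) : Fin 3 → Mat2) 0 * (B 1 * B 2) +
          L 0 * (Pi.single 1 (sylv (L 1) (B 1) Y) : Fin 3 → Mat2) 1 * B 2 +
          L 0 * L 1 * (Pi.single 1 (sylv (L 1) (B 1) Y) : Fin 3 → Mat2) 2 =
          L 0 * (L 1 * Y - Y * B 1) * B 2
        rw [Pi.single_eq_same, Pi.single_eq_of_ne (by decide), Pi.single_eq_of_ne (by decide)]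
        show (0 : Mat2) * (B 1 * B 2) + L 0 * (L 1 * Y - Y * B 1) * B 2 + L 0 * L 1 * 0 =
          L 0 * (L 1 * Y - Y * B 1) * B 2
        rw [mul_zero, zero_mul, add_zero, zero_add]
      rwa [hψ] at this
    set P : Mat2 := B 1 * B 2 * N with hPdef
    set W : Mat2 := B 2 * N with hWdef
    have hPW : P = B 1 * W := by rw [hPdef, hWdef, mul_assoc]
    -- (i)  P L₀ = B₀ P
    have hi : P * L 0 = B 0 * P := by
      have key : ∀ Y : Mat2, (Y * (P * L 0 - B 0 * P)).trace = 0 := by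
        intro Y
        have e1 : (L 0 * Y - Y * B 0) * (B 1 * B 2) * N =
            L 0 * (Y * P) - Y * (B 0 * P) := by rw [hPdef]; noncomm_ring
        have e2 := rel0 Y
        rw [e1] at e2
        rw [mul_sub, Matrix.trace_sub, ← mul_assoc]
        rw [Matrix.trace_sub, Matrix.trace_mul_comm (L 0) (Y * P)] at e2
        exact e2
      exact sub_eq_zero.mp (eq_zero_of_traces _ key)
    -- (ii)  W L₀ L₁ = B₁ W L₀
    have hii : W * L 0 * L 1 = B 1 * W * L 0 := by
      have key : ∀ Y : Mat2, (Y * (W * L 0 * L 1 - B 1 * W * L 0)).trace = 0 := by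
        intro Y
        have e1 : L 0 * (L 1 * Y - Y * B 1) * B 2 * N =
            (L 0 * L 1) * (Y * W) - L 0 * (Y * (B 1 * W)) := by rw [hWdef]; noncomm_ring
        have e2 := rel1 Y
        rw [e1, Matrix.trace_sub, Matrix.trace_mul_comm (L 0 * L 1) (Y * W),
          Matrix.trace_mul_comm (L 0) (Y * (B 1 * W))] at e2
        rw [mul_sub, Matrix.trace_sub]
        have g1 : Y * (W * L 0 * L 1) = Y * W * (L 0 * L 1) := by noncomm_ring
        have g2 : Y * (B 1 * W * L 0) = Y * (B 1 * W) * L 0 := by noncomm_ring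
        rw [g1, g2]
        exact e2
      exact sub_eq_zero.mp (eq_zero_of_traces _ key)
    -- (ii') (B₀ P) L₁ = B₁ (B₀ P)
    have hii' : (B 0 * P) * L 1 = B 1 * (B 0 * P) := by
      have hZ : B 1 * (W * L 0) = B 0 * P := by
        rw [← mul_assoc, ← hPW, hi]
      have hZL : (W * L 0) * L 1 = B 1 * (W * L 0) := by rw [hii, mul_assoc]
      calc (B 0 * P) * L 1 = B 1 * ((W * L 0) * L 1) := by rw [← hZ, mul_assoc]
        _ = B 1 * (B 1 * (W * L 0)) := by rw [hZL]
        _ = B 1 * (B 0 * P) := by rw [hZ]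
    have hP0 : P ≠ 0 := by
      intro hP
      apply hN0
      obtain ⟨b1, hb1⟩ := hB1u
      obtain ⟨b2, hb2⟩ := hB2u
      have h1' : (↑b1⁻¹ : Mat2) * P = W := by
        rw [hPW, ← hb1, ← mul_assoc, Units.inv_mul, one_mul]
      have h2' : (↑b2⁻¹ : Mat2) * W = N := by
        rw [hWdef, ← hb2, ← mul_assoc, Units.inv_mul, one_mul]
      rw [← h2', ← h1', hP, mul_zero, mul_zero]
    have hPnu : ¬ IsUnit P := by
      intro hPu
      obtain ⟨uP, huP⟩ := hPu
      have htr : (B 0).trace = (L 0).trace := by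
        calc (B 0).trace = (B 0 * (↑uP * ↑uP⁻¹)).trace := by
              rw [← Units.val_mul, mul_inv_cancel, Units.val_one, mul_one]
          _ = ((B 0 * ↑uP) * ↑uP⁻¹).trace := by rw [mul_assoc]
          _ = (↑uP⁻¹ * (B 0 * ↑uP)).trace := by rw [Matrix.trace_mul_comm]
          _ = (↑uP⁻¹ * (↑uP * L 0)).trace := by rw [huP, ← hi]
          _ = (L 0).trace := by rw [← mul_assoc, ← Units.val_mul, inv_mul_cancel,
                Units.val_one, one_mul]
      rw [hL0, hB0, trace_conj_diag, trace_conj_diag] at htr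
      simp only [Matrix.cons_val_zero, Matrix.cons_val_one, Matrix.head_cons] at htr
      exact hbc (add_left_cancel htr).symm
    have hdetP : P.det = 0 := by
      by_contra hd
      exact hPnu ((Matrix.isUnit_iff_isUnit_det P).mpr (isUnit_iff_ne_zero.mpr hd))
    obtain ⟨x, y, hx, hy, hfac⟩ := rank_one_fact P hP0 hdetP
    rw [hfac] at hi hii'
    obtain ⟨μ, hyL0, hBx⟩ := outer_intertwine hx hy (L 0) (B 0) hi
    have hμ0 : μ ≠ 0 := mulVec_eig_ne_zero hx hB0u hBx
    have hB0P : B 0 * vecMulVec x y = vecMulVec (μ • x) y := by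
      rw [mul_vecMulVec, hBx]
    rw [hB0P] at hii'
    have hx' : μ • x ≠ 0 := smul_ne_zero hμ0 hx
    obtain ⟨ν, hyL1, hB1x⟩ := outer_intertwine hx' hy (L 1) (B 1) hii'
    have hν0 : ν ≠ 0 := vecMul_eig_ne_zero hy hL1u hyL1
    exact irred_no_left_eig L hLirr hLprod hy hμ0 hν0 hyL0 hyL1
  -- ======================== Part 5 : dim 𝒯 = 5 ========================
  have hkerU : finrank ℂ (LinearMap.ker ((psiMap L B).comp U.subtype)) = 5 := by
    have hrn := LinearMap.finrank_range_add_finrank_ker ((psiMap L B).comp U.subtype)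
    rw [hsurj, finrank_top, finrank_mat2, hU9] at hrn
    omega
  have hT5 : finrank ℂ (Tspace L B) = 5 := by
    have h2 : LinearMap.ker ((psiMap L B).comp U.subtype) =
        Submodule.comap U.subtype (LinearMap.ker (psiMap L B)) := LinearMap.ker_comp _ _
    have h1 : Submodule.map U.subtype
        (Submodule.comap U.subtype (LinearMap.ker (psiMap L B))) =
        U ⊓ LinearMap.ker (psiMap L B) := Submodule.map_comap_subtype _ _
    have h3 : finrank ℂ (Submodule.map U.subtype
        (Submodule.comap U.subtype (LinearMap.ker (psiMap L B)))) =
        finrank ℂ (Submodule.comap U.subtype (LinearMap.ker (psiMap L B))) :=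
      (Submodule.equivMapOfInjective U.subtype (Submodule.injective_subtype U) _).finrank_eq.symm
    have hTeq : Tspace L B = U ⊓ LinearMap.ker (psiMap L B) := by
      unfold Tspace
      rw [hUdef]
    rw [hTeq, ← h1, h3, ← h2, hkerU]
  -- ======================== Part 6 : quotient ========================
  have hcomap : finrank ℂ (Submodule.comap (Tspace L B).subtype (Qspace L B)) = 4 := by
    rw [(Submodule.comapSubtypeEquivOfLe hQT).finrank_eq, hQ4]
  have hquot := Submodule.finrank_quotient_add_finrank
    (Submodule.comap (Tspace L B).subtype (Qspace L B))
  rw [hcomap, hT5] at hquot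
  exact ⟨hT5, hQ4, hQT, by omega⟩
end
end
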